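/- arXiv:2411.19003 — 5 statements merged into one kernel-verified Lean document; each statement's English description precedes it below -/
import Mathlib

section
/- For any finite sets X, Y, any function f : X × Y → {0,1}, and any integers κ ≥ 1 and ℓ ≥ 1, D((f^{⊘κ})^ℓ) ≤ D(f^ℓ) + ⌈ℓ·log₂ κ⌉. -/
/-- A deterministic two-party communication protocol over `X × Y` with range `Z`:
a binary tree whose internal nodes are labeled by a function of the row player's
input or of the column player's input, and whose leaves are labeled by outputs. -/
inductive Protocol (X Y Z : Type) : Type where
  | leaf : Z → Protocol X Y Z
  | nodeA : (X → Bool) → Protocol X Y Z → Protocol X Y Z → Protocol X Y Z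
  | nodeB : (Y → Bool) → Protocol X Y Z → Protocol X Y Z → Protocol X Y Z

namespace Protocol

/-- The value computed by a protocol on input `(x, y)`. -/
def eval {X Y Z : Type} : Protocol X Y Z → X → Y → Z
  | leaf z, _, _ => z
  | nodeA a l r, x, y => if a x then (r.eval x y) else (l.eval x y)
  | nodeB b l r, x, y => if b y then (r.eval x y) else (l.eval x y)

/-- The depth (cost) of a protocol. -/
def depth {X Y Z : Type} : Protocol X Y Z → ℕ
  | leaf _ => 0
  | nodeA _ l r => max (depth l) (depth r) + 1
  | nodeB _ l r => max (depth l) (depth r) + 1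

end Protocol

/-- A protocol computes `f` if its output on every input `(x, y)` is `f x y`. -/
def Computes {X Y Z : Type} (P : Protocol X Y Z) (f : X → Y → Z) : Prop :=
  ∀ x y, P.eval x y = f x y

/-- Deterministic communication complexity: the minimum depth of a protocol computing `f`. -/
noncomputable def commC {X Y Z : Type} (f : X → Y → Z) : ℕ :=
  sInf {d : ℕ | ∃ P : Protocol X Y Z, Computes P f ∧ P.depth = d}

/-- Communication complexity of a boolean matrix. -/
noncomputable def matD {m n : ℕ} (M : Matrix (Fin m) (Fin n) Bool) : ℕ :=
  commC (fun i j => M i j)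

/-- The direct sum `f^ℓ` of a two-argument function. -/
def directSum {X Y Z : Type} (f : X → Y → Z) (ℓ : ℕ) :
    (Fin ℓ → X) → (Fin ℓ → Y) → (Fin ℓ → Z) :=
  fun x y i => f (x i) (y i)

/-- The interlacing operation on functions: `f^{⊘k} ((i,x), (y₁,…,y_k)) = f (x, y_i)`. -/
def funInterlace {X Y : Type} (f : X → Y → Bool) (k : ℕ) :
    (Fin k × X) → (Fin k → Y) → Bool :=
  fun ix ys => f ix.2 (ys ix.1)

/-- The interlacing operation on matrices: `A^{⊘p}` is the `mp × n^p` matrix whose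
entry at `(i, j)` is `A (i % m) ((j / n^⌊i/m⌋) % n)`. -/
def interlace {m n : ℕ} (A : Matrix (Fin m) (Fin n) Bool) (p : ℕ) :
    Matrix (Fin (m * p)) (Fin (n ^ p)) Bool :=
  Matrix.of fun i j =>
    have hm : 0 < m := by
      rcases Nat.eq_zero_or_pos m with h | h
      · exact absurd i.isLt (by simp [h])
      · exact h
    have hp : 0 < p := by
      rcases Nat.eq_zero_or_pos p with h | h
      · exact absurd i.isLt (by simp [h])
      · exact h
    have hn : 0 < n := by
      rcases Nat.eq_zero_or_pos n with h | h
      · exact absurd j.isLt (by simp [h, Nat.zero_pow hp])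
      · exact h
    A ⟨(i : ℕ) % m, Nat.mod_lt _ hm⟩ ⟨((j : ℕ) / n ^ ((i : ℕ) / m)) % n, Nat.mod_lt _ hn⟩

/-- Extraction of the rows `R` and columns `C` of a matrix (in sorted order). -/
def extract {m n : ℕ} (A : Matrix (Fin m) (Fin n) Bool)
    (R : Finset (Fin m)) (C : Finset (Fin n)) :
    Matrix (Fin R.card) (Fin C.card) Bool :=
  Matrix.of fun i j => A (R.orderIsoOfFin rfl i).1 (C.orderIsoOfFin rfl j).1

/-- `G` is a subgame of `H`: a copy of `G` appears in `H` (on some rows and columns). -/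
def Subgame {a b c d : ℕ} (G : Matrix (Fin a) (Fin b) Bool)
    (H : Matrix (Fin c) (Fin d) Bool) : Prop :=
  ∃ (σ : Fin a → Fin c) (τ : Fin b → Fin d),
    Function.Injective σ ∧ Function.Injective τ ∧ ∀ i j, G i j = H (σ i) (τ j)

/-- `R ⊆ {0,…,mp−1}` is `m,T,p`-equipartitioned: every block `[mγ, m(γ+1))` contains
exactly `⌈T⌉` selected rows. -/
def Equipartitioned (m : ℕ) (T : ℝ) (p : ℕ) (R : Finset (Fin (m * p))) : Prop :=
  ∀ γ < p, (R.filter (fun r : Fin (m * p) => m * γ ≤ (r : ℕ) ∧ (r : ℕ) < m * (γ + 1))).card = ⌈T⌉₊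

/-- `D(⟨M,p,x,y⟩)`: the minimum communication complexity over the bracket set, the set of
extractions of `M^{⊘⌈p⌉}` along an `m,⌈mx⌉,⌈p⌉`-equipartitioned row selection and a column
selection of size `⌈n^⌈p⌉·y⌉`.  (Non-integer numbers of interlaced copies are rounded up.) -/
noncomputable def bracketD {m n : ℕ} (M : Matrix (Fin m) (Fin n) Bool)
    (p x y : ℝ) : ℕ :=
  sInf { d : ℕ | ∃ (R : Finset (Fin (m * ⌈p⌉₊))) (C : Finset (Fin (n ^ ⌈p⌉₊))),
    Equipartitioned m ((m : ℝ) * x) ⌈p⌉₊ R ∧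
    C.card = ⌈(n : ℝ) ^ (⌈p⌉₊ : ℕ) * y⌉₊ ∧
    d = matD (extract (interlace M ⌈p⌉₊) R C) }

/-- Dimensions of the alternating communication game `φ_i`. -/
def phiDim (B : ℕ) : ℕ → ℕ × ℕ
  | 0 => (1, 2)
  | i + 1 => ((phiDim B i).2 ^ B, (phiDim B i).1 * B)

/-- The alternating communication game family: `φ₀ = [1 0]`, `φ_{i+1} = (φ_i^{⊘B})ᵀ`. -/
def phi (B : ℕ) : (i : ℕ) → Matrix (Fin (phiDim B i).1) (Fin (phiDim B i).2) Bool
  | 0 => Matrix.of ![![true, false]]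
  | i + 1 => (interlace (phi B i) B).transpose

-- The row part `S` of the `Q`-projection of `(R, C)`.
open Classical in
noncomputable def rowProj {m p : ℕ} (Q : Finset (Fin p)) (R : Finset (Fin (m * p))) :
    Finset (Fin (m * Q.card)) :=
  Finset.univ.filter (fun s : Fin (m * Q.card) =>
    ∃ r ∈ R, (r : ℕ) % m = (s : ℕ) % m ∧
      (r : ℕ) / m = ((Q.orderIsoOfFin rfl ⟨(s : ℕ) / m,
        Nat.div_lt_of_lt_mul s.isLt⟩).1 : ℕ))

-- The column part `D` of the `Q`-projection of `(R, C)`: the set of numbers whose base-`n`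
-- digits are the digits of some `c ∈ C` at the positions of `Q` (in increasing order).
open Classical in
noncomputable def colProj {n p : ℕ} (Q : Finset (Fin p)) (C : Finset (Fin (n ^ p))) :
    Finset (Fin (n ^ Q.card)) :=
  Finset.univ.filter (fun d : Fin (n ^ Q.card) =>
    ∃ c ∈ C, ∀ γ : Fin Q.card,
      (d : ℕ) / n ^ (γ : ℕ) % n =
        (c : ℕ) / n ^ (((Q.orderIsoOfFin rfl γ).1 : ℕ)) % n)


namespace Protocol

/-- Alice broadcasts the low `t` bits of `code x`, then continues. -/
def sendA {X Y Z : Type} : ℕ → (X → ℕ) → (ℕ → Protocol X Y Z) → Protocol X Y Z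
  | 0, _, cont => cont 0
  | t+1, code, cont =>
      nodeA (fun x => decide (code x % 2 = 1))
        (sendA t (fun x => code x / 2) (fun v => cont (2 * v)))
        (sendA t (fun x => code x / 2) (fun v => cont (2 * v + 1)))

/-- Bob broadcasts the low `t` bits of `code y`, then continues. -/
def sendB {X Y Z : Type} : ℕ → (Y → ℕ) → (ℕ → Protocol X Y Z) → Protocol X Y Z
  | 0, _, cont => cont 0
  | t+1, code, cont =>
      nodeB (fun y => decide (code y % 2 = 1))
        (sendB t (fun y => code y / 2) (fun v => cont (2 * v)))
        (sendB t (fun y => code y / 2) (fun v => cont (2 * v + 1)))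

lemma eval_sendA {X Y Z : Type} :
    ∀ (t : ℕ) (code : X → ℕ) (cont : ℕ → Protocol X Y Z) (x : X) (y : Y),
    (sendA t code cont).eval x y = (cont (code x % 2 ^ t)).eval x y
  | 0, code, cont, x, y => by simp [sendA, eval, Nat.mod_one]
  | t+1, code, cont, x, y => by
      have h : code x % 2 ^ (t+1) = code x % 2 + 2 * (code x / 2 % 2 ^ t) := by
        rw [pow_succ, mul_comm, Nat.mod_mul]
      simp only [sendA, eval]
      rcases Nat.mod_two_eq_zero_or_one (code x) with h2 | h2
      · rw [if_neg (by simp [h2]), eval_sendA t, h, h2, Nat.zero_add]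
      · rw [if_pos (by simp [h2]), eval_sendA t, h, h2, Nat.add_comm]

lemma eval_sendB {X Y Z : Type} :
    ∀ (t : ℕ) (code : Y → ℕ) (cont : ℕ → Protocol X Y Z) (x : X) (y : Y),
    (sendB t code cont).eval x y = (cont (code y % 2 ^ t)).eval x y
  | 0, code, cont, x, y => by simp [sendB, eval, Nat.mod_one]
  | t+1, code, cont, x, y => by
      have h : code y % 2 ^ (t+1) = code y % 2 + 2 * (code y / 2 % 2 ^ t) := by
        rw [pow_succ, mul_comm, Nat.mod_mul]
      simp only [sendB, eval]
      rcases Nat.mod_two_eq_zero_or_one (code y) with h2 | h2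
      · rw [if_neg (by simp [h2]), eval_sendB t, h, h2, Nat.zero_add]
      · rw [if_pos (by simp [h2]), eval_sendB t, h, h2, Nat.add_comm]

lemma depth_sendA {X Y Z : Type} :
    ∀ (t : ℕ) (code : X → ℕ) (cont : ℕ → Protocol X Y Z) (D : ℕ),
    (∀ v, (cont v).depth ≤ D) → (sendA t code cont).depth ≤ t + D
  | 0, _, cont, D, h => by simpa [sendA] using h 0
  | t+1, code, cont, D, h => by
      simp only [sendA, depth]
      have h1 := depth_sendA t (fun x => code x / 2) (fun v => cont (2 * v)) D (fun v => h _)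
      have h2 := depth_sendA t (fun x => code x / 2) (fun v => cont (2 * v + 1)) D (fun v => h _)
      omega

/-- Relabel the inputs of a protocol. -/
def mapI {X Y X' Y' Z : Type} (φ : X → X') (ψ : Y → Y') :
    Protocol X' Y' Z → Protocol X Y Z
  | leaf z => leaf z
  | nodeA a l r => nodeA (fun x => a (φ x)) (mapI φ ψ l) (mapI φ ψ r)
  | nodeB b l r => nodeB (fun y => b (ψ y)) (mapI φ ψ l) (mapI φ ψ r)

lemma eval_mapI {X Y X' Y' Z : Type} (φ : X → X') (ψ : Y → Y') :
    ∀ (P : Protocol X' Y' Z) (x : X) (y : Y),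
    (mapI φ ψ P).eval x y = P.eval (φ x) (ψ y)
  | leaf z, x, y => rfl
  | nodeA a l r, x, y => by
      simp only [mapI, eval]
      rw [eval_mapI φ ψ l, eval_mapI φ ψ r]
  | nodeB b l r, x, y => by
      simp only [mapI, eval]
      rw [eval_mapI φ ψ l, eval_mapI φ ψ r]

lemma depth_mapI {X Y X' Y' Z : Type} (φ : X → X') (ψ : Y → Y') :
    ∀ (P : Protocol X' Y' Z), (mapI φ ψ P).depth = P.depth
  | leaf z => rfl
  | nodeA a l r => by
      simp only [mapI, depth, depth_mapI φ ψ l, depth_mapI φ ψ r]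
  | nodeB b l r => by
      simp only [mapI, depth, depth_mapI φ ψ l, depth_mapI φ ψ r]

end Protocol

/-- Every function over finite domains is computed by some protocol. -/
lemma exists_protocol_computes {X Y Z : Type} [Fintype X] [Fintype Y] (z₀ : Z)
    (f : X → Y → Z) : ∃ P : Protocol X Y Z, Computes P f := by
  classical
  let eX := Fintype.equivFin X
  let eY := Fintype.equivFin Y
  refine ⟨Protocol.sendA (Fintype.card X) (fun x => (eX x).val) (fun v =>
    if h : v < Fintype.card X then
      Protocol.sendB (Fintype.card Y) (fun y => (eY y).val) (fun w =>
        if h' : w < Fintype.card Y then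
          Protocol.leaf (f (eX.symm ⟨v, h⟩) (eY.symm ⟨w, h'⟩))
        else Protocol.leaf z₀)
    else Protocol.leaf z₀), ?_⟩
  intro x y
  rw [Protocol.eval_sendA,
    Nat.mod_eq_of_lt (lt_trans (eX x).isLt Nat.lt_two_pow_self),
    dif_pos (eX x).isLt, Protocol.eval_sendB,
    Nat.mod_eq_of_lt (lt_trans (eY y).isLt Nat.lt_two_pow_self),
    dif_pos (eY y).isLt]
  simp [Protocol.eval]

/-- The key construction: from a protocol for `f^ℓ` and `t` with `κ^ℓ ≤ 2^t`,
build a protocol for `(f^{⊘κ})^ℓ` of depth at most `t` more. -/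
lemma exists_interlace_protocol {X Y : Type} (f : X → Y → Bool) (κ ℓ t : ℕ)
    (hκℓ : κ ^ ℓ ≤ 2 ^ t)
    (P : Protocol (Fin ℓ → X) (Fin ℓ → Y) (Fin ℓ → Bool))
    (hP : Computes P (directSum f ℓ)) :
    ∃ Q : Protocol (Fin ℓ → Fin κ × X) (Fin ℓ → (Fin κ → Y)) (Fin ℓ → Bool),
      Computes Q (directSum (funInterlace f κ) ℓ) ∧ Q.depth ≤ t + P.depth := by
  classical
  let e : (Fin ℓ → Fin κ) ≃ Fin (κ ^ ℓ) := Fintype.equivFinOfCardEq (by simp)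
  let cont : ℕ → Protocol (Fin ℓ → Fin κ × X) (Fin ℓ → (Fin κ → Y)) (Fin ℓ → Bool) :=
    fun v => if h : v < κ ^ ℓ then
      Protocol.mapI (fun x j => (x j).2) (fun y j => y j (e.symm ⟨v, h⟩ j)) P
    else Protocol.leaf (fun _ => false)
  refine ⟨Protocol.sendA t (fun x => (e (fun j => (x j).1)).val) cont, ?_, ?_⟩
  · intro x y
    have hlt : ((e (fun j => (x j).1)).val) < κ ^ ℓ := (e _).isLt
    rw [Protocol.eval_sendA, Nat.mod_eq_of_lt (lt_of_lt_of_le hlt hκℓ)]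
    show (cont _).eval x y = _
    simp only [cont, dif_pos hlt]
    rw [Protocol.eval_mapI, hP]
    funext j
    simp only [directSum, funInterlace, Fin.eta, Equiv.symm_apply_apply]
  · refine Protocol.depth_sendA t _ _ P.depth (fun v => ?_)
    by_cases h : v < κ ^ ℓ
    · simp only [cont, dif_pos h, Protocol.depth_mapI]; exact le_rfl
    · simp only [cont, dif_neg h]
      exact Nat.zero_le _

theorem interlace_direct_sum_upper_bound {X Y : Type} [Fintype X] [Fintype Y]
    (f : X → Y → Bool) (κ ℓ : ℕ) (hκ : 1 ≤ κ) (hℓ : 1 ≤ ℓ) :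
    commC (directSum (funInterlace f κ) ℓ) ≤
      commC (directSum f ℓ) + ⌈(ℓ : ℝ) * Real.logb 2 (κ : ℝ)⌉₊ := by
  classical
  set t := ⌈(ℓ : ℝ) * Real.logb 2 (κ : ℝ)⌉₊ with ht
  have hκℓ : κ ^ ℓ ≤ 2 ^ t := by
    have hκ0 : (0 : ℝ) < (κ : ℝ) := by exact_mod_cast hκ
    have h1 : ((κ : ℝ)) ^ ℓ ≤ (2 : ℝ) ^ t := by
      have heq : ((κ : ℝ)) ^ ℓ = (2 : ℝ) ^ ((ℓ : ℝ) * Real.logb 2 (κ : ℝ)) := by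
        rw [mul_comm, Real.rpow_mul (by norm_num),
          Real.rpow_logb (by norm_num) (by norm_num) hκ0, Real.rpow_natCast]
      rw [heq, ← Real.rpow_natCast 2 t]
      exact Real.rpow_le_rpow_of_exponent_le (by norm_num) (Nat.le_ceil _)
    exact_mod_cast h1
  have hne : {d : ℕ | ∃ P : Protocol (Fin ℓ → X) (Fin ℓ → Y) (Fin ℓ → Bool),
      Computes P (directSum f ℓ) ∧ P.depth = d}.Nonempty := by
    obtain ⟨P, hP⟩ := exists_protocol_computes (fun _ => false) (directSum f ℓ)
    exact ⟨P.depth, P, hP, rfl⟩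
  obtain ⟨P, hP, hPd⟩ := Nat.sInf_mem hne
  obtain ⟨Q, hQc, hQd⟩ := exists_interlace_protocol f κ ℓ t hκℓ P hP
  have h1 : commC (directSum (funInterlace f κ) ℓ) ≤ Q.depth :=
    Nat.sInf_le ⟨Q, hQc, rfl⟩
  have h2 : P.depth = commC (directSum f ℓ) := hPd
  omega
end

section
/- Let M be a boolean matrix, p ≥ 1 an integer, δ ∈ {0,1}, and 0 < x ≤ 1/2, 0 < y ≤ 1 reals. If D(⟨M,2p+δ,2x,y⟩) ≥ 1, then D(⟨M,2p+δ,2x,y⟩) ≥ 1 + min over ℓ ∈ {0,…,p−1} and a ∈ [0,1] of the minimum of the two quantities: (i) max( D(⟨M,p+ℓ+δ,x,y^a⟩), D(⟨M,p−ℓ,x,y^{1−a}⟩) ), and (ii) D(⟨M,2p+δ,2x,y/2⟩). -/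
section Aux

namespace Protocol

/-- Pull back a protocol along maps on the two input types. -/
def comap {X Y Z X' Y' : Type} (σ : X' → X) (τ : Y' → Y) :
    Protocol X Y Z → Protocol X' Y' Z
  | leaf z => leaf z
  | nodeA a l r => nodeA (fun x => a (σ x)) (comap σ τ l) (comap σ τ r)
  | nodeB b l r => nodeB (fun y => b (τ y)) (comap σ τ l) (comap σ τ r)

@[simp] lemma comap_eval {X Y Z X' Y' : Type} (σ : X' → X) (τ : Y' → Y)
    (P : Protocol X Y Z) (x : X') (y : Y') :
    (P.comap σ τ).eval x y = P.eval (σ x) (τ y) := by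
  induction P with
  | leaf z => rfl
  | nodeA a l r hl hr => simp [comap, eval, hl, hr]
  | nodeB b l r hl hr => simp [comap, eval, hl, hr]

@[simp] lemma comap_depth {X Y Z X' Y' : Type} (σ : X' → X) (τ : Y' → Y)
    (P : Protocol X Y Z) : (P.comap σ τ).depth = P.depth := by
  induction P with
  | leaf z => rfl
  | nodeA a l r hl hr => simp [comap, depth, hl, hr]
  | nodeB b l r hl hr => simp [comap, depth, hl, hr]

end Protocol

/-- A trivial protocol enumerating the row player's input. -/
def enumProt {a : ℕ} {Y : Type} (f : Fin a → Y → Bool) : ℕ → ℕ → Protocol (Fin a) Y Bool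
  | 0, _ => .leaf false
  | fuel+1, t => .nodeA (fun x => decide ((x : ℕ) = t))
      (enumProt f fuel (t+1))
      (.nodeB (fun y => if h : t < a then f ⟨t, h⟩ y else false) (.leaf false) (.leaf true))

lemma enumProt_eval {a : ℕ} {Y : Type} (f : Fin a → Y → Bool) :
    ∀ (fuel t : ℕ) (x : Fin a) (y : Y), t + fuel = a → t ≤ (x : ℕ) →
      (enumProt f fuel t).eval x y = f x y := by
  intro fuel
  induction fuel with
  | zero => intro t x y h hx; exact absurd x.isLt (by omega)
  | succ fuel ih =>
    intro t x y h hx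
    by_cases hxt : (x : ℕ) = t
    · have ht : t < a := hxt ▸ x.isLt
      have hx' : x = ⟨t, ht⟩ := Fin.ext hxt
      simp [enumProt, Protocol.eval, hxt, ht, hx']
    · have : t + 1 ≤ (x : ℕ) := by omega
      simp [enumProt, Protocol.eval, hxt]
      exact ih (t+1) x y (by omega) this

lemma computes_exists {a b : ℕ} (A : Matrix (Fin a) (Fin b) Bool) :
    ∃ P : Protocol (Fin a) (Fin b) Bool, Computes P fun i j => A i j := by
  refine ⟨enumProt (fun i j => A i j) a 0, fun x y => ?_⟩
  exact enumProt_eval _ a 0 x y (by omega) (Nat.zero_le _)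

lemma matD_spec {a b : ℕ} (A : Matrix (Fin a) (Fin b) Bool) :
    ∃ P : Protocol (Fin a) (Fin b) Bool, Computes P (fun i j => A i j) ∧ P.depth = matD A := by
  obtain ⟨P, hP⟩ := computes_exists A
  have : matD A ∈ {d : ℕ | ∃ P : Protocol (Fin a) (Fin b) Bool,
      Computes P (fun i j => A i j) ∧ P.depth = d} :=
    Nat.sInf_mem ⟨P.depth, P, hP, rfl⟩
  obtain ⟨P', h1, h2⟩ := this
  exact ⟨P', h1, h2⟩

lemma matD_le {a b : ℕ} {A : Matrix (Fin a) (Fin b) Bool} {P : Protocol (Fin a) (Fin b) Bool}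
    (h : Computes P fun i j => A i j) : matD A ≤ P.depth :=
  Nat.sInf_le ⟨P, h, rfl⟩

end Aux
section Digits

lemma sum_digits_lt {n L : ℕ} (hn : 0 < n) (f : ℕ → ℕ) (hf : ∀ i, f i < n) :
    (Finset.range L).sum (fun i => f i * n ^ i) < n ^ L := by
  induction L with
  | zero => simpa using hn
  | succ L ih =>
    rw [Finset.sum_range_succ, pow_succ]
    have hfL := hf L
    have h1 : f L * n ^ L ≤ (n - 1) * n ^ L :=
      Nat.mul_le_mul_right _ (by omega)
    nlinarith [pow_pos hn L, ih]

lemma digit_of_sum {n : ℕ} (hn : 0 < n) :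
    ∀ (j L : ℕ) (f : ℕ → ℕ), (∀ i, f i < n) → j < L →
      ((Finset.range L).sum (fun i => f i * n ^ i)) / n ^ j % n = f j := by
  intro j
  induction j with
  | zero =>
    intro L f hf hL
    obtain ⟨L', rfl⟩ : ∃ L', L = L' + 1 := ⟨L - 1, by omega⟩
    rw [Finset.sum_range_succ']
    simp only [pow_zero, Nat.div_one, mul_one]
    have : ∀ i, f (i + 1) * n ^ (i + 1) = n * (f (i + 1) * n ^ i) := by
      intro i; ring
    rw [Finset.sum_congr rfl (fun i _ => this i), ← Finset.mul_sum]
    rw [add_comm, Nat.add_mul_mod_self_left]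
    exact Nat.mod_eq_of_lt (hf 0)
  | succ j ih =>
    intro L f hf hL
    obtain ⟨L', rfl⟩ : ∃ L', L = L' + 1 := ⟨L - 1, by omega⟩
    rw [Finset.sum_range_succ']
    have hstep : ∀ i, f (i + 1) * n ^ (i + 1) = (f (i + 1) * n ^ i) * n := by
      intro i; ring
    rw [Finset.sum_congr rfl (fun i _ => hstep i), ← Finset.sum_mul]
    simp only [pow_zero, mul_one]
    have hpow : n ^ (j + 1) = n * n ^ j := by ring
    rw [hpow, ← Nat.div_div_eq_div_mul]
    have hdiv : ((Finset.range L').sum (fun i => f (i + 1) * n ^ i) * n + f 0) / n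
        = (Finset.range L').sum (fun i => f (i + 1) * n ^ i) := by
      rw [mul_comm, Nat.mul_add_div hn, Nat.div_eq_of_lt (hf 0), add_zero]
    rw [hdiv]
    exact ih L' (fun i => f (i + 1)) (fun i => hf _) (by omega)

lemma digits_reconstruct {n : ℕ} (hn : 0 < n) :
    ∀ (L d : ℕ), d < n ^ L → (Finset.range L).sum (fun i => d / n ^ i % n * n ^ i) = d := by
  intro L
  induction L with
  | zero =>
    intro d hd
    rw [pow_zero] at hd
    have h0 : d = 0 := by omega
    subst h0
    simp
  | succ L ih =>
    intro d hd
    rw [Finset.sum_range_succ']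
    have hstep : ∀ i, d / n ^ (i + 1) % n * n ^ (i + 1) = (d / n) / n ^ i % n * n ^ i * n := by
      intro i
      rw [pow_succ', ← Nat.div_div_eq_div_mul]
      ring
    rw [Finset.sum_congr rfl (fun i _ => hstep i), ← Finset.sum_mul]
    have hdn : d / n < n ^ L := by
      rw [pow_succ'] at hd
      exact Nat.div_lt_of_lt_mul hd
    rw [ih (d / n) hdn]
    simp only [pow_zero, mul_one, Nat.div_one]
    rw [Nat.mul_comm (d / n) n]
    exact Nat.div_add_mod d n
section Proj

/-- The `t`-th digit of `c`, read along the positions selected by `Q`. -/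
noncomputable def qdig (n : ℕ) {k : ℕ} (Q : Finset (Fin k)) (c : ℕ) (t : ℕ) : ℕ :=
  if h : t < Q.card then c / n ^ (((Q.orderIsoOfFin rfl ⟨t, h⟩).1 : Fin k) : ℕ) % n else 0

lemma qdig_lt {n : ℕ} (hn : 0 < n) {k : ℕ} (Q : Finset (Fin k)) (c t : ℕ) :
    qdig n Q c t < n := by
  unfold qdig
  split
  · exact Nat.mod_lt _ hn
  · exact hn

/-- The number whose base-`n` digits are the digits of `c` at the positions of `Q`. -/
noncomputable def dProj (n : ℕ) {k : ℕ} (hn : 0 < n) (Q : Finset (Fin k)) (c : Fin (n ^ k)) :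
    Fin (n ^ Q.card) :=
  ⟨(Finset.range Q.card).sum (fun t => qdig n Q (c : ℕ) t * n ^ t),
    sum_digits_lt hn _ (fun i => qdig_lt hn Q _ i)⟩

lemma dProj_digit {n k : ℕ} (hn : 0 < n) (Q : Finset (Fin k)) (c : Fin (n ^ k))
    (γ : Fin Q.card) :
    ((dProj n hn Q c : Fin (n ^ Q.card)) : ℕ) / n ^ (γ : ℕ) % n =
      (c : ℕ) / n ^ (((Q.orderIsoOfFin rfl γ).1 : Fin k) : ℕ) % n := by
  have h := digit_of_sum hn (γ : ℕ) Q.card (qdig n Q (c : ℕ))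
    (fun i => qdig_lt hn Q _ i) γ.isLt
  show ((Finset.range Q.card).sum (fun t => qdig n Q (c : ℕ) t * n ^ t)) / n ^ (γ : ℕ) % n = _
  rw [h]
  unfold qdig
  rw [dif_pos γ.isLt]

lemma mem_colProj_dProj {n k : ℕ} (hn : 0 < n) (Q : Finset (Fin k))
    (C : Finset (Fin (n ^ k))) {c : Fin (n ^ k)} (hc : c ∈ C) :
    dProj n hn Q c ∈ colProj Q C := by
  classical
  rw [colProj, Finset.mem_filter]
  exact ⟨Finset.mem_univ _, c, hc, fun γ => dProj_digit hn Q c γ⟩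

lemma dProj_pair_inj {n k : ℕ} (hn : 0 < n) (Q : Finset (Fin k)) (c c' : Fin (n ^ k))
    (h1 : dProj n hn Q c = dProj n hn Q c')
    (h2 : dProj n hn Qᶜ c = dProj n hn Qᶜ c') : c = c' := by
  have hdig : ∀ γ : Fin k, (c : ℕ) / n ^ (γ : ℕ) % n = (c' : ℕ) / n ^ (γ : ℕ) % n := by
    intro γ
    by_cases hγ : γ ∈ Q
    · obtain ⟨t, ht⟩ := (Q.orderIsoOfFin rfl).surjective ⟨γ, hγ⟩
      have e1 := dProj_digit hn Q c t
      have e2 := dProj_digit hn Q c' t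
      rw [h1] at e1
      rw [ht] at e1 e2
      exact e1.symm.trans e2
    · have hγ' : γ ∈ Qᶜ := Finset.mem_compl.mpr hγ
      obtain ⟨t, ht⟩ := (Qᶜ.orderIsoOfFin rfl).surjective ⟨γ, hγ'⟩
      have e1 := dProj_digit hn Qᶜ c t
      have e2 := dProj_digit hn Qᶜ c' t
      rw [h2] at e1
      rw [ht] at e1 e2
      exact e1.symm.trans e2
  have := digits_reconstruct hn k (c : ℕ) c.isLt
  have h' := digits_reconstruct hn k (c' : ℕ) c'.isLt
  apply Fin.ext
  rw [← this, ← h']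
  apply Finset.sum_congr rfl
  intro i hi
  rw [Finset.mem_range] at hi
  rw [hdig ⟨i, hi⟩]

lemma card_le_colProj_mul {n k : ℕ} (hn : 0 < n) (Q : Finset (Fin k))
    (C : Finset (Fin (n ^ k))) :
    C.card ≤ (colProj Q C).card * (colProj Qᶜ C).card := by
  classical
  rw [← Finset.card_product]
  apply Finset.card_le_card_of_injOn (fun c => (dProj n hn Q c, dProj n hn Qᶜ c))
  · intro c hc
    exact Finset.mem_product.mpr ⟨mem_colProj_dProj hn Q C hc, mem_colProj_dProj hn Qᶜ C hc⟩
  · intro c _ c' _ h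
    exact dProj_pair_inj hn Q c c' (congrArg Prod.fst h) (congrArg Prod.snd h)

lemma colProj_card_le {n k : ℕ} (Q : Finset (Fin k)) (C : Finset (Fin (n ^ k))) :
    (colProj Q C).card ≤ n ^ Q.card := by
  simpa using Finset.card_le_univ (colProj Q C)

lemma colProj_nonempty {n k : ℕ} (hn : 0 < n) (Q : Finset (Fin k))
    {C : Finset (Fin (n ^ k))} (hC : C.Nonempty) : (colProj Q C).Nonempty := by
  obtain ⟨c, hc⟩ := hC
  exact ⟨dProj n hn Q c, mem_colProj_dProj hn Q C hc⟩

end Proj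
section Master

lemma interlace_apply {m n : ℕ} (M : Matrix (Fin m) (Fin n) Bool) (k : ℕ)
    (hm : 0 < m) (hn : 0 < n) (i : Fin (m * k)) (j : Fin (n ^ k)) :
    interlace M k i j =
      M ⟨(i : ℕ) % m, Nat.mod_lt _ hm⟩ ⟨((j : ℕ) / n ^ ((i : ℕ) / m)) % n, Nat.mod_lt _ hn⟩ :=
  rfl

lemma interlace_eq_interlace {m n k k' : ℕ} (M : Matrix (Fin m) (Fin n) Bool)
    (hm : 0 < m) (hn : 0 < n) (i : Fin (m * k)) (j : Fin (n ^ k))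
    (i' : Fin (m * k')) (j' : Fin (n ^ k'))
    (h1 : (i : ℕ) % m = (i' : ℕ) % m)
    (h2 : (j : ℕ) / n ^ ((i : ℕ) / m) % n = (j' : ℕ) / n ^ ((i' : ℕ) / m) % n) :
    interlace M k i j = interlace M k' i' j' := by
  rw [interlace_apply M k hm hn, interlace_apply M k' hm hn]
  congr 1
  · exact Fin.ext h1
  · exact Fin.ext h2

lemma extract_apply {a b : ℕ} (A : Matrix (Fin a) (Fin b) Bool)
    (R : Finset (Fin a)) (C : Finset (Fin b)) (i : Fin R.card) (j : Fin C.card) :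
    extract A R C i j = A ((R.orderIsoOfFin rfl i).1) ((C.orderIsoOfFin rfl j).1) :=
  rfl

lemma div_eq_of_block {m γ s : ℕ} (h1 : m * γ ≤ s) (h2 : s < m * (γ + 1)) :
    s / m = γ :=
  Nat.div_eq_of_lt_le (by rw [mul_comm]; exact h1) (by rw [mul_comm]; exact h2)

/-- The communication bound part of the projection argument. -/
lemma master_matD {m n k : ℕ} (hm : 0 < m) (hn : 0 < n) (M : Matrix (Fin m) (Fin n) Bool)
    (R : Finset (Fin (m * k))) (C : Finset (Fin (n ^ k)))
    (Q : Finset (Fin k))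
    (chosen : Fin k → Finset (Fin R.card))
    (hchosen_blk : ∀ γ ∈ Q, ∀ i ∈ chosen γ,
      (((R.orderIsoOfFin rfl i).1 : Fin (m * k)) : ℕ) / m = (γ : ℕ))
    (bb : Bool) (aR : Fin R.card → Bool)
    (hside : ∀ γ ∈ Q, ∀ i ∈ chosen γ, aR i = bb)
    (child : Protocol (Fin R.card) (Fin C.card) Bool)
    (hchild : ∀ i j, aR i = bb →
      child.eval i j = extract (interlace M k) R C i j)
    (S : Finset (Fin (m * Q.card)))
    (hSmem : ∀ s ∈ S,
      ∃ i ∈ chosen ((Q.orderIsoOfFin rfl ⟨(s : ℕ) / m,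
          Nat.div_lt_of_lt_mul s.isLt⟩).1),
        (((R.orderIsoOfFin rfl i).1 : Fin (m * k)) : ℕ) % m = (s : ℕ) % m)
    (D : Finset (Fin (n ^ Q.card)))
    (hD : D ⊆ colProj Q C) :
    matD (extract (interlace M Q.card) S D) ≤ child.depth := by
  classical
  have hσex : ∀ i : Fin S.card,
      ∃ i₀, i₀ ∈ chosen ((Q.orderIsoOfFin rfl ⟨(((S.orderIsoOfFin rfl i).1 :
          Fin (m * Q.card)) : ℕ) / m,
          Nat.div_lt_of_lt_mul (Fin.isLt _)⟩).1) ∧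
        (((R.orderIsoOfFin rfl i₀).1 : Fin (m * k)) : ℕ) % m
          = (((S.orderIsoOfFin rfl i).1 : Fin (m * Q.card)) : ℕ) % m := by
    intro i
    obtain ⟨i₀, h1, h2⟩ := hSmem _ (S.orderIsoOfFin rfl i).2
    exact ⟨i₀, h1, h2⟩
  choose σ hσ1 hσ2 using hσex
  have hτex : ∀ j : Fin D.card, ∃ c ∈ C, ∀ γ : Fin Q.card,
      (((D.orderIsoOfFin rfl j).1 : Fin (n ^ Q.card)) : ℕ) / n ^ (γ : ℕ) % n =
        (c : ℕ) / n ^ (((Q.orderIsoOfFin rfl γ).1 : Fin k) : ℕ) % n := by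
    intro j
    have hmem := hD (D.orderIsoOfFin rfl j).2
    rw [colProj, Finset.mem_filter] at hmem
    exact hmem.2
  choose c0 hc0 hdig using hτex
  set τ : Fin D.card → Fin C.card :=
    fun j => (C.orderIsoOfFin rfl).symm ⟨c0 j, hc0 j⟩ with hτ
  have hcc : ∀ j, ((C.orderIsoOfFin rfl (τ j)).1 : Fin (n ^ k)) = c0 j := by
    intro j
    rw [hτ]
    simp
  have hcomp : Computes (child.comap σ τ)
      (fun i j => extract (interlace M Q.card) S D i j) := by
    intro i j
    show (child.comap σ τ).eval i j = extract (interlace M Q.card) S D i j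
    rw [Protocol.comap_eval]
    have hgQ : ((Q.orderIsoOfFin rfl ⟨(((S.orderIsoOfFin rfl i).1 :
        Fin (m * Q.card)) : ℕ) / m, Nat.div_lt_of_lt_mul (Fin.isLt _)⟩).1) ∈ Q :=
      (Q.orderIsoOfFin rfl _).2
    have hb : aR (σ i) = bb := hside _ hgQ _ (hσ1 i)
    rw [hchild _ _ hb]
    rw [extract_apply, extract_apply]
    apply interlace_eq_interlace M hm hn _ _ _ _ (by rw [hσ2 i])
    rw [hchosen_blk _ hgQ _ (hσ1 i), hcc j]
    exact (hdig j _).symm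
  calc matD (extract (interlace M Q.card) S D) ≤ (child.comap σ τ).depth := matD_le hcomp
    _ = child.depth := Protocol.comap_depth σ τ child

open Classical in
/-- Existence of the projected row selection, with equipartition and the bound. -/
lemma master {m n k : ℕ} (hm : 0 < m) (hn : 0 < n) (M : Matrix (Fin m) (Fin n) Bool)
    (R : Finset (Fin (m * k))) (C : Finset (Fin (n ^ k)))
    (Q : Finset (Fin k))
    (chosen : Fin k → Finset (Fin R.card)) (T' : ℕ)
    (hchosen_card : ∀ γ ∈ Q, (chosen γ).card = T')
    (hchosen_blk : ∀ γ ∈ Q, ∀ i ∈ chosen γ,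
      (((R.orderIsoOfFin rfl i).1 : Fin (m * k)) : ℕ) / m = (γ : ℕ))
    (bb : Bool) (aR : Fin R.card → Bool)
    (hside : ∀ γ ∈ Q, ∀ i ∈ chosen γ, aR i = bb)
    (child : Protocol (Fin R.card) (Fin C.card) Bool)
    (hchild : ∀ i j, aR i = bb →
      child.eval i j = extract (interlace M k) R C i j)
    (D : Finset (Fin (n ^ Q.card)))
    (hD : D ⊆ colProj Q C) :
    ∃ S : Finset (Fin (m * Q.card)),
      (∀ γ' < Q.card, (S.filter (fun r : Fin (m * Q.card) =>
          m * γ' ≤ (r : ℕ) ∧ (r : ℕ) < m * (γ' + 1))).card = T') ∧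
      matD (extract (interlace M Q.card) S D) ≤ child.depth := by
  refine ⟨Finset.univ.filter (fun s : Fin (m * Q.card) =>
    ∃ i ∈ chosen ((Q.orderIsoOfFin rfl ⟨(s : ℕ) / m,
        Nat.div_lt_of_lt_mul s.isLt⟩).1),
      (((R.orderIsoOfFin rfl i).1 : Fin (m * k)) : ℕ) % m = (s : ℕ) % m), ?_, ?_⟩
  · -- equipartitioned
    intro γ' hγ'
    set g : Fin k := (Q.orderIsoOfFin rfl ⟨γ', hγ'⟩).1 with hg
    have hgQ : g ∈ Q := (Q.orderIsoOfFin rfl ⟨γ', hγ'⟩).2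
    have hmono : m * (γ' + 1) ≤ m * Q.card := Nat.mul_le_mul_left m hγ'
    have himg : (Finset.univ.filter (fun s : Fin (m * Q.card) =>
        ∃ i ∈ chosen ((Q.orderIsoOfFin rfl ⟨(s : ℕ) / m,
            Nat.div_lt_of_lt_mul s.isLt⟩).1),
          (((R.orderIsoOfFin rfl i).1 : Fin (m * k)) : ℕ) % m = (s : ℕ) % m)).filter
          (fun r : Fin (m * Q.card) => m * γ' ≤ (r : ℕ) ∧ (r : ℕ) < m * (γ' + 1))
        = (chosen g).image (fun i => (⟨m * γ' +
            (((R.orderIsoOfFin rfl i).1 : Fin (m * k)) : ℕ) % m, by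
              have h1 : (((R.orderIsoOfFin rfl i).1 : Fin (m * k)) : ℕ) % m < m :=
                Nat.mod_lt _ hm
              have h2 : m * γ' + (((R.orderIsoOfFin rfl i).1 : Fin (m * k)) : ℕ) % m
                  < m * (γ' + 1) := by rw [Nat.mul_succ]; omega
              omega⟩ : Fin (m * Q.card))) := by
      ext s
      simp only [Finset.mem_filter, Finset.mem_univ, true_and, Finset.mem_image]
      constructor
      · rintro ⟨⟨i, hi, hmod⟩, hlo, hhi⟩
        have hdiv : (s : ℕ) / m = γ' := div_eq_of_block hlo hhi
        have hfix : (⟨(s : ℕ) / m, Nat.div_lt_of_lt_mul s.isLt⟩ : Fin Q.card)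
            = ⟨γ', hγ'⟩ := Fin.ext hdiv
        rw [hfix] at hi
        refine ⟨i, hi, ?_⟩
        apply Fin.ext
        show m * γ' + (((R.orderIsoOfFin rfl i).1 : Fin (m * k)) : ℕ) % m = (s : ℕ)
        rw [hmod]
        have h3 := Nat.div_add_mod (s : ℕ) m
        rw [hdiv] at h3
        omega
      · rintro ⟨i, hi, heq⟩
        have hρ : (((R.orderIsoOfFin rfl i).1 : Fin (m * k)) : ℕ) % m < m :=
          Nat.mod_lt _ hm
        have hv : m * γ' + (((R.orderIsoOfFin rfl i).1 : Fin (m * k)) : ℕ) % m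
            = (s : ℕ) := congrArg Fin.val heq
        have hhi : (s : ℕ) < m * (γ' + 1) := by rw [Nat.mul_succ]; omega
        have hlo : m * γ' ≤ (s : ℕ) := by omega
        have hdiv : (s : ℕ) / m = γ' := div_eq_of_block hlo hhi
        have hmod : (s : ℕ) % m = (((R.orderIsoOfFin rfl i).1 : Fin (m * k)) : ℕ) % m := by
          rw [← hv, Nat.mul_add_mod, Nat.mod_mod_of_dvd]
          exact dvd_refl m
        have hfix : (⟨(s : ℕ) / m, Nat.div_lt_of_lt_mul s.isLt⟩ : Fin Q.card)
            = ⟨γ', hγ'⟩ := Fin.ext hdiv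
        refine ⟨⟨i, by rw [hfix]; exact hi, hmod.symm⟩, hlo, hhi⟩
    rw [himg, Finset.card_image_of_injOn, hchosen_card g hgQ]
    -- injectivity
    intro i hi i' hi' hii
    have hval : (((R.orderIsoOfFin rfl i).1 : Fin (m * k)) : ℕ) % m
        = (((R.orderIsoOfFin rfl i').1 : Fin (m * k)) : ℕ) % m := by
      have h := congrArg (fun z : Fin (m * Q.card) => (z : ℕ)) hii
      simpa using h
    have hdiv : (((R.orderIsoOfFin rfl i).1 : Fin (m * k)) : ℕ) / m
        = (((R.orderIsoOfFin rfl i').1 : Fin (m * k)) : ℕ) / m := by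
      rw [hchosen_blk g hgQ i hi, hchosen_blk g hgQ i' hi']
    have hvv : (((R.orderIsoOfFin rfl i).1 : Fin (m * k)) : ℕ)
        = (((R.orderIsoOfFin rfl i').1 : Fin (m * k)) : ℕ) := by
      have e1 := Nat.div_add_mod (((R.orderIsoOfFin rfl i).1 : Fin (m * k)) : ℕ) m
      have e2 := Nat.div_add_mod (((R.orderIsoOfFin rfl i').1 : Fin (m * k)) : ℕ) m
      rw [hdiv, hval] at e1
      omega
    exact (R.orderIsoOfFin rfl).injective (Subtype.ext (Fin.ext hvv))
  · -- communication bound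
    apply master_matD hm hn M R C Q chosen hchosen_blk bb aR hside child hchild _ _ D hD
    intro s hs
    rw [Finset.mem_filter] at hs
    exact hs.2

end Master
section Glue

lemma matD_eq_zero_rows {a b : ℕ} (ha : a = 0) (A : Matrix (Fin a) (Fin b) Bool) :
    matD A = 0 := by
  subst ha
  refine Nat.le_antisymm ?_ (Nat.zero_le _)
  exact matD_le (P := Protocol.leaf false) (fun x y => x.elim0)

lemma matD_eq_zero_cols {a b : ℕ} (hb : b = 0) (A : Matrix (Fin a) (Fin b) Bool) :
    matD A = 0 := by
  subst hb
  refine Nat.le_antisymm ?_ (Nat.zero_le _)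
  exact matD_le (P := Protocol.leaf false) (fun x y => y.elim0)

lemma two_mul_ceil_le (t : ℝ) (ht : 0 ≤ t) : 2 * ⌈t⌉₊ ≤ ⌈2 * t⌉₊ + 1 := by
  have h1 : (⌈t⌉₊ : ℝ) < t + 1 := Nat.ceil_lt_add_one ht
  have h2 : 2 * t ≤ (⌈2 * t⌉₊ : ℝ) := Nat.le_ceil _
  have h3 : ((2 * ⌈t⌉₊ : ℕ) : ℝ) < ((⌈2 * t⌉₊ + 2 : ℕ) : ℝ) := by push_cast; linarith
  have := Nat.cast_lt.mp h3
  omega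

lemma ceil_half_le (t : ℝ) (ht : 0 ≤ t) : ⌈t / 2⌉₊ + ⌈t / 2⌉₊ ≤ ⌈t⌉₊ + 1 := by
  have h1 : (⌈t / 2⌉₊ : ℝ) < t / 2 + 1 := Nat.ceil_lt_add_one (by linarith)
  have h2 : t ≤ (⌈t⌉₊ : ℝ) := Nat.le_ceil _
  have h3 : ((⌈t / 2⌉₊ + ⌈t / 2⌉₊ : ℕ) : ℝ) < ((⌈t⌉₊ + 2 : ℕ) : ℝ) := by push_cast; linarith
  have := Nat.cast_lt.mp h3
  omega

lemma bracketD_le_of {m n : ℕ} (M : Matrix (Fin m) (Fin n) Bool)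
    (pr x' y' : ℝ) (k' : ℕ) (hk : ⌈pr⌉₊ = k')
    (R : Finset (Fin (m * k'))) (C : Finset (Fin (n ^ k')))
    (hR : Equipartitioned m ((m : ℝ) * x') k' R)
    (hC : C.card = ⌈(n : ℝ) ^ k' * y'⌉₊)
    (t : ℕ) (h : matD (extract (interlace M k') R C) ≤ t) :
    bracketD M pr x' y' ≤ t := by
  subst hk
  exact le_trans (Nat.sInf_le ⟨R, C, hR, hC, rfl⟩) h

lemma blk_card {m k : ℕ} (hm : 0 < m) (R : Finset (Fin (m * k))) (T : ℕ)
    (hR : ∀ γ < k, (R.filter (fun r : Fin (m * k) =>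
        m * γ ≤ (r : ℕ) ∧ (r : ℕ) < m * (γ + 1))).card = T)
    (γ : ℕ) (hγ : γ < k) :
    (Finset.univ.filter (fun i : Fin R.card =>
      (((R.orderIsoOfFin rfl i).1 : Fin (m * k)) : ℕ) / m = γ)).card = T := by
  classical
  rw [← hR γ hγ]
  apply Finset.card_bij (fun (i : Fin R.card) _ => ((R.orderIsoOfFin rfl i).1 : Fin (m * k)))
  · intro i hi
    rw [Finset.mem_filter] at hi ⊢
    obtain ⟨-, hdiv⟩ := hi
    refine ⟨(R.orderIsoOfFin rfl i).2, ?_, ?_⟩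
    · have h3 := Nat.div_add_mod (((R.orderIsoOfFin rfl i).1 : Fin (m * k)) : ℕ) m
      rw [hdiv] at h3
      omega
    · have h3 := Nat.div_add_mod (((R.orderIsoOfFin rfl i).1 : Fin (m * k)) : ℕ) m
      have h4 := Nat.mod_lt (((R.orderIsoOfFin rfl i).1 : Fin (m * k)) : ℕ) hm
      rw [hdiv] at h3
      rw [Nat.mul_succ]
      omega
  · intro i _ i' _ h
    exact (R.orderIsoOfFin rfl).injective (Subtype.ext h)
  · intro r hr
    rw [Finset.mem_filter] at hr
    obtain ⟨hrR, hlo, hhi⟩ := hr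
    obtain ⟨i, hi⟩ := (R.orderIsoOfFin rfl).surjective ⟨r, hrR⟩
    refine ⟨i, ?_, ?_⟩
    · rw [Finset.mem_filter]
      refine ⟨Finset.mem_univ _, ?_⟩
      rw [hi]
      exact div_eq_of_block hlo hhi
    · rw [hi]

open Real in
lemma choose_exponent {n q1 q2 : ℕ} (hn : 0 < n) (y : ℝ) (hy0 : 0 < y) (hy : y ≤ 1)
    (u v cC : ℕ) (hu1 : 1 ≤ u) (hu : u ≤ n ^ q1) (hv : v ≤ n ^ q2)
    (huv : cC ≤ u * v) (hC : (n : ℝ) ^ (q1 + q2) * y ≤ (cC : ℝ)) :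
    ∃ a : ℝ, 0 ≤ a ∧ a ≤ 1 ∧
      ⌈(n : ℝ) ^ q1 * y ^ a⌉₊ ≤ u ∧ ⌈(n : ℝ) ^ q2 * y ^ (1 - a)⌉₊ ≤ v := by
  have hnq1 : (0 : ℝ) < (n : ℝ) ^ q1 := by positivity
  have hnq2 : (0 : ℝ) < (n : ℝ) ^ q2 := by positivity
  have hu0 : (0 : ℝ) < (u : ℝ) := by exact_mod_cast hu1
  have hkey : (n : ℝ) ^ q1 * (n : ℝ) ^ q2 * y ≤ (u : ℝ) * (v : ℝ) := by
    rw [← pow_add]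
    calc (n : ℝ) ^ (q1 + q2) * y ≤ (cC : ℝ) := hC
      _ ≤ (u : ℝ) * (v : ℝ) := by exact_mod_cast huv
  have huR : (u : ℝ) ≤ (n : ℝ) ^ q1 := by exact_mod_cast hu
  have hvR : (v : ℝ) ≤ (n : ℝ) ^ q2 := by exact_mod_cast hv
  have hq1y : (n : ℝ) ^ q1 * y ≤ (u : ℝ) := by nlinarith
  rcases eq_or_lt_of_le hy with hy1 | hy1
  · -- y = 1
    subst hy1
    refine ⟨1, zero_le_one, le_refl 1, ?_, ?_⟩
    · norm_num [Real.one_rpow]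
      nlinarith
    · norm_num [Real.one_rpow]
      nlinarith
  · -- y < 1
    set t : ℝ := (u : ℝ) / (n : ℝ) ^ q1 with htdef
    have ht0 : 0 < t := by positivity
    have ht1 : t ≤ 1 := by rw [htdef, div_le_one hnq1]; exact huR
    have hyt : y ≤ t := by rw [htdef, le_div_iff₀ hnq1]; nlinarith
    have hlogy : Real.log y < 0 := Real.log_neg hy0 hy1
    have hlogt : Real.log t ≤ 0 := Real.log_nonpos (le_of_lt ht0) ht1
    set a : ℝ := Real.logb y t with hadef
    have hya : y ^ a = t := Real.rpow_logb hy0 (ne_of_lt hy1) ht0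
    have ha0 : 0 ≤ a := by
      rw [hadef, Real.logb, div_nonneg_iff]
      right
      exact ⟨hlogt, le_of_lt hlogy⟩
    have hlogyt : Real.log y ≤ Real.log t := Real.log_le_log hy0 hyt
    have ha1 : a ≤ 1 := by
      rw [hadef, Real.logb]
      rw [div_le_one_iff]
      right; right
      exact ⟨hlogy, by linarith⟩
    refine ⟨a, ha0, ha1, ?_, ?_⟩
    · rw [hya, htdef, mul_div_cancel₀ _ (ne_of_gt hnq1)]
      exact le_of_eq (Nat.ceil_natCast u)
    · rw [Nat.ceil_le]
      have h1a : y ^ (1 - a) = y / t := by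
        rw [Real.rpow_sub hy0, Real.rpow_one, hya]
      rw [h1a, htdef]
      have hyt' : y / ((u : ℝ) / (n : ℝ) ^ q1) = y * (n : ℝ) ^ q1 / (u : ℝ) := by
        field_simp
      rw [hyt', mul_div_assoc']
      rw [div_le_iff₀ hu0]
      nlinarith
end Glue
lemma bracket_mem {m n : ℕ} (M : Matrix (Fin m) (Fin n) Bool)
    (pr x' y' : ℝ) (k' : ℕ) (hk : ⌈pr⌉₊ = k')
    (h : 1 ≤ bracketD M pr x' y') :
    ∃ (R : Finset (Fin (m * k'))) (C : Finset (Fin (n ^ k'))),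
      Equipartitioned m ((m : ℝ) * x') k' R ∧
      C.card = ⌈(n : ℝ) ^ k' * y'⌉₊ ∧
      bracketD M pr x' y' = matD (extract (interlace M k') R C) := by
  subst hk
  rw [bracketD] at h ⊢
  have hne : { d : ℕ | ∃ (R : Finset (Fin (m * ⌈pr⌉₊))) (C : Finset (Fin (n ^ ⌈pr⌉₊))),
      Equipartitioned m ((m : ℝ) * x') ⌈pr⌉₊ R ∧
      C.card = ⌈(n : ℝ) ^ (⌈pr⌉₊ : ℕ) * y'⌉₊ ∧
      d = matD (extract (interlace M ⌈pr⌉₊) R C) }.Nonempty := by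
    by_contra hcon
    rw [Set.not_nonempty_iff_eq_empty] at hcon
    rw [hcon, Nat.sInf_empty] at h
    omega
  obtain ⟨R, C, h1, h2, h3⟩ := Nat.sInf_mem hne
  exact ⟨R, C, h1, h2, h3⟩
theorem old_partition {m n : ℕ} (M : Matrix (Fin m) (Fin n) Bool)
    (p : ℕ) (hp : 1 ≤ p) (δ : ℕ) (hδ : δ ≤ 1)
    (x y : ℝ) (hx0 : 0 < x) (hx : x ≤ 1 / 2) (hy0 : 0 < y) (hy : y ≤ 1)
    (h1 : 1 ≤ bracketD M ((2 * p + δ : ℕ) : ℝ) (2 * x) y) :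
    1 + sInf { v : ℕ | ∃ ℓ : ℕ, ℓ < p ∧ ∃ a : ℝ, 0 ≤ a ∧ a ≤ 1 ∧
        v = min
          (max (bracketD M ((p + ℓ + δ : ℕ) : ℝ) x (y ^ a))
               (bracketD M ((p - ℓ : ℕ) : ℝ) x (y ^ (1 - a))))
          (bracketD M ((2 * p + δ : ℕ) : ℝ) (2 * x) (y / 2)) } ≤
      bracketD M ((2 * p + δ : ℕ) : ℝ) (2 * x) y := by
  classical
  obtain ⟨R, C, hEq, hCc, heq⟩ := bracket_mem M ((2 * p + δ : ℕ) : ℝ) (2 * x) y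
    (2 * p + δ) (Nat.ceil_natCast _) h1
  rw [heq] at h1
  suffices hfin : ∃ v₀ ∈ { v : ℕ | ∃ ℓ : ℕ, ℓ < p ∧ ∃ a : ℝ, 0 ≤ a ∧ a ≤ 1 ∧
      v = min
        (max (bracketD M ((p + ℓ + δ : ℕ) : ℝ) x (y ^ a))
             (bracketD M ((p - ℓ : ℕ) : ℝ) x (y ^ (1 - a))))
        (bracketD M ((2 * p + δ : ℕ) : ℝ) (2 * x) (y / 2)) },
      v₀ + 1 ≤ matD (extract (interlace M (2 * p + δ)) R C) by
    obtain ⟨v₀, hv₀mem, hv₀⟩ := hfin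
    have hle := Nat.sInf_le hv₀mem
    rw [heq]
    omega
  -- degenerate dimensions are impossible
  have hm : 0 < m := by
    rcases Nat.eq_zero_or_pos m with h0 | h0
    · exfalso
      have hcard : R.card = 0 := by
        have h := Finset.card_le_univ R
        simp only [Finset.card_univ, Fintype.card_fin] at h
        have hz : m * (2 * p + δ) = 0 := by rw [h0, Nat.zero_mul]
        omega
      rw [matD_eq_zero_rows hcard] at h1
      omega
    · exact h0
  have hn : 0 < n := by
    rcases Nat.eq_zero_or_pos n with h0 | h0
    · exfalso
      have hpow : n ^ (2 * p + δ) = 0 := by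
        rw [h0]
        exact Nat.zero_pow (by omega)
      have hcard : C.card = 0 := by
        have h := Finset.card_le_univ C
        simp only [Finset.card_univ, Fintype.card_fin] at h
        omega
      rw [matD_eq_zero_cols hcard] at h1
      omega
    · exact h0
  -- the optimal protocol
  obtain ⟨P, hPcomp, hPdepth⟩ := matD_spec (extract (interlace M (2 * p + δ)) R C)
  cases P with
  | leaf z =>
    exfalso
    rw [show (Protocol.leaf z : Protocol (Fin R.card) (Fin C.card) Bool).depth = 0 from rfl]
      at hPdepth
    omega
  | nodeB b L Rt =>
    -- column split: use the second term of the min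
    set c' : ℕ := ⌈(n : ℝ) ^ (2 * p + δ) * (y / 2)⌉₊ with hc'
    have hhalf : c' + c' ≤ C.card + 1 := by
      have h := ceil_half_le ((n : ℝ) ^ (2 * p + δ) * y) (by positivity)
      have harg : (n : ℝ) ^ (2 * p + δ) * (y / 2) = ((n : ℝ) ^ (2 * p + δ) * y) / 2 := by
        ring
      rw [hc', harg, hCc]
      exact h
    have hsum : (Finset.univ.filter (fun j : Fin C.card => b j = true)).card +
        (Finset.univ.filter (fun j : Fin C.card => ¬ (b j = true))).card = C.card := by
      rw [Finset.card_filter_add_card_filter_not]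
      simp [Finset.card_univ]
    have hbig : ∃ b' : Bool, c' ≤ (Finset.univ.filter
        (fun j : Fin C.card => b j = b')).card := by
      by_cases hF : c' ≤ (Finset.univ.filter (fun j : Fin C.card => b j = true)).card
      · exact ⟨true, hF⟩
      · refine ⟨false, ?_⟩
        have hfc : (Finset.univ.filter (fun j : Fin C.card => b j = false)) =
            (Finset.univ.filter (fun j : Fin C.card => ¬ (b j = true))) := by
          apply Finset.filter_congr
          intro j _
          simp
        rw [hfc]
        omega
    obtain ⟨b', hb'⟩ := hbig
    obtain ⟨J, hJsub, hJcard⟩ := Finset.exists_subset_card_eq hb'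
    set D : Finset (Fin (n ^ (2 * p + δ))) :=
      J.image (fun j => ((C.orderIsoOfFin rfl j).1 : Fin (n ^ (2 * p + δ)))) with hD
    have hDcard : D.card = c' := by
      rw [hD, Finset.card_image_of_injOn, hJcard]
      intro j _ j' _ h
      exact (C.orderIsoOfFin rfl).injective (Subtype.ext h)
    set child : Protocol (Fin R.card) (Fin C.card) Bool := bif b' then Rt else L with hchild
    have hchild_eval : ∀ i j, b j = b' →
        child.eval i j = extract (interlace M (2 * p + δ)) R C i j := by
      intro i j hbj
      have h := hPcomp i j
      rw [show (Protocol.nodeB b L Rt).eval i j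
          = if b j then Rt.eval i j else L.eval i j from rfl] at h
      cases b' <;> rw [hchild] <;> simp only [hbj] at h ⊢ <;> simpa using h
    have hτex : ∀ j : Fin D.card, ∃ j₀, j₀ ∈ J ∧
        ((C.orderIsoOfFin rfl j₀).1 : Fin (n ^ (2 * p + δ)))
          = ((D.orderIsoOfFin rfl j).1 : Fin (n ^ (2 * p + δ))) := by
      intro j
      obtain ⟨j₀, h1, h2⟩ := Finset.mem_image.mp (D.orderIsoOfFin rfl j).2
      exact ⟨j₀, h1, h2⟩
    choose τ hτJ hτval using hτex
    have hbτ : ∀ j, b (τ j) = b' := by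
      intro j
      have := hJsub (hτJ j)
      rw [Finset.mem_filter] at this
      exact this.2
    have hcomp : Computes (child.comap id τ)
        (fun i j => extract (interlace M (2 * p + δ)) R D i j) := by
      intro i j
      show (child.comap id τ).eval i j = extract (interlace M (2 * p + δ)) R D i j
      rw [Protocol.comap_eval, hchild_eval _ _ (hbτ j)]
      rw [extract_apply, extract_apply, id_eq, hτval j]
    have hbound : matD (extract (interlace M (2 * p + δ)) R D)
        + 1 ≤ matD (extract (interlace M (2 * p + δ)) R C) := by
      have h2 := matD_le hcomp
      rw [Protocol.comap_depth] at h2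
      have h3 : child.depth + 1 ≤ (Protocol.nodeB b L Rt).depth := by
        rw [show (Protocol.nodeB b L Rt).depth = max L.depth Rt.depth + 1 from rfl]
        cases b' <;> rw [hchild] <;> simp [Nat.succ_le_succ, le_max_left, le_max_right]
      omega
    have hbr : bracketD M ((2 * p + δ : ℕ) : ℝ) (2 * x) (y / 2)
        ≤ matD (extract (interlace M (2 * p + δ)) R C) - 1 := by
      apply bracketD_le_of M _ _ _ (2 * p + δ) (Nat.ceil_natCast _) R D hEq hDcard
      omega
    refine ⟨min
        (max (bracketD M ((p + 0 + δ : ℕ) : ℝ) x (y ^ (0:ℝ)))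
             (bracketD M ((p - 0 : ℕ) : ℝ) x (y ^ (1 - (0:ℝ)))))
        (bracketD M ((2 * p + δ : ℕ) : ℝ) (2 * x) (y / 2)),
      ⟨0, hp, 0, le_refl 0, zero_le_one, rfl⟩, ?_⟩
    have := min_le_right
        (max (bracketD M ((p + 0 + δ : ℕ) : ℝ) x (y ^ (0:ℝ)))
             (bracketD M ((p - 0 : ℕ) : ℝ) x (y ^ (1 - (0:ℝ)))))
        (bracketD M ((2 * p + δ : ℕ) : ℝ) (2 * x) (y / 2))
    omega
  | nodeA aR L Rt =>
    -- row split
    set T : ℕ := ⌈(m : ℝ) * (2 * x)⌉₊ with hT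
    set T' : ℕ := ⌈(m : ℝ) * x⌉₊ with hT'
    have h2T : 2 * T' ≤ T + 1 := by
      have h := two_mul_ceil_le ((m : ℝ) * x) (by positivity)
      have harg : (m : ℝ) * (2 * x) = 2 * ((m : ℝ) * x) := by ring
      rw [hT, hT', harg]
      exact h
    set Ablk : Fin (2 * p + δ) → Finset (Fin R.card) := fun γ =>
      Finset.univ.filter (fun i : Fin R.card =>
        (((R.orderIsoOfFin rfl i).1 : Fin (m * (2 * p + δ))) : ℕ) / m = (γ : ℕ)) with hAblk
    have hblk : ∀ γ : Fin (2 * p + δ), (Ablk γ).card = T := by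
      intro γ
      exact blk_card hm R T (fun γ' hγ' => hEq γ' hγ') (γ : ℕ) γ.isLt
    set side : Fin (2 * p + δ) → Bool := fun γ =>
      decide (T' ≤ ((Ablk γ).filter (fun i => aR i = true)).card) with hside
    have hcside : ∀ γ, T' ≤ ((Ablk γ).filter (fun i => aR i = side γ)).card := by
      intro γ
      have hsplit : ((Ablk γ).filter (fun i => aR i = true)).card +
          ((Ablk γ).filter (fun i => ¬ (aR i = true))).card = T := by
        rw [Finset.card_filter_add_card_filter_not]
        exact hblk γ
      by_cases hT2 : T' ≤ ((Ablk γ).filter (fun i => aR i = true)).card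
      · have hsγ : side γ = true := by rw [hside]; simp [hT2]
        rw [hsγ]
        exact hT2
      · have hsγ : side γ = false := by rw [hside]; simp [hT2]
        rw [hsγ]
        have hfc : ((Ablk γ).filter (fun i => aR i = false)) =
            ((Ablk γ).filter (fun i => ¬ (aR i = true))) := by
          apply Finset.filter_congr
          intro i _
          simp
        rw [hfc]
        omega
    have hexch : ∀ γ : Fin (2 * p + δ), ∃ t, t ⊆ ((Ablk γ).filter
        (fun i => aR i = side γ)) ∧ t.card = T' := by
      intro γ
      obtain ⟨t, ht1, ht2⟩ := Finset.exists_subset_card_eq (hcside γ)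
      exact ⟨t, ht1, ht2⟩
    choose chosen hchsub hchcard using hexch
    have hblk_chosen : ∀ γ : Fin (2 * p + δ), ∀ i ∈ chosen γ,
        (((R.orderIsoOfFin rfl i).1 : Fin (m * (2 * p + δ))) : ℕ) / m = (γ : ℕ) := by
      intro γ i hi
      have h := hchsub γ hi
      rw [Finset.mem_filter] at h
      have h2 := h.1
      rw [hAblk, Finset.mem_filter] at h2
      exact h2.2
    have hside_chosen : ∀ γ : Fin (2 * p + δ), ∀ i ∈ chosen γ, aR i = side γ := by
      intro γ i hi
      have h := hchsub γ hi
      rw [Finset.mem_filter] at h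
      exact h.2
    -- choose the block bipartition
    have hdata : ∃ (ℓ : ℕ) (Q1 : Finset (Fin (2 * p + δ))) (b1 b2 : Bool), ℓ < p ∧
        Q1.card = p + ℓ + δ ∧ (∀ γ ∈ Q1, side γ = b1) ∧ (∀ γ ∈ Q1ᶜ, side γ = b2) := by
      set Qt : Finset (Fin (2 * p + δ)) := Finset.univ.filter (fun γ => side γ = true)
        with hQt
      have hQtc : Qtᶜ = Finset.univ.filter (fun γ => side γ = false) := by
        ext γ
        simp [hQt, Finset.mem_compl]
      have hQtcard : Qt.card + Qtᶜ.card = 2 * p + δ := by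
        rw [Finset.card_add_card_compl]
        simp [Fintype.card_fin]
      rcases Nat.eq_zero_or_pos Qt.card with hq0 | hq1
      · -- all blocks on side false
        have hallF : ∀ γ, side γ = false := by
          intro γ
          by_contra hcon
          have hγt : γ ∈ Qt := by
            rw [hQt, Finset.mem_filter]
            exact ⟨Finset.mem_univ _, by simpa using hcon⟩
          rw [Finset.card_eq_zero] at hq0
          rw [hq0] at hγt
          exact absurd hγt (Finset.notMem_empty _)
        have hcard : p + 0 + δ ≤ (Finset.univ : Finset (Fin (2 * p + δ))).card := by
          simp [Finset.card_univ, Fintype.card_fin]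
          omega
        obtain ⟨Q1, -, hQ1c⟩ := Finset.exists_subset_card_eq hcard
        exact ⟨0, Q1, false, false, hp, hQ1c, fun γ _ => hallF γ, fun γ _ => hallF γ⟩
      · rcases Nat.lt_or_ge Qt.card (p + δ) with hqlo | hqhi
        · -- 1 ≤ Qt.card ≤ p + δ - 1 ≤ p : take Q1 = Qtᶜ, side false
          refine ⟨p - Qt.card, Qtᶜ, false, true, by omega, by omega, ?_, ?_⟩
          · intro γ hγ
            rw [hQtc, Finset.mem_filter] at hγ
            exact hγ.2
          · intro γ hγ
            rw [compl_compl, hQt, Finset.mem_filter] at hγ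
            exact hγ.2
        · rcases Nat.lt_or_ge Qt.card (2 * p + δ) with hqhi2 | hqtop
          · -- p + δ ≤ Qt.card ≤ 2p + δ - 1 : take Q1 = Qt, side true
            refine ⟨Qt.card - p - δ, Qt, true, false, by omega, by omega, ?_, ?_⟩
            · intro γ hγ
              rw [hQt, Finset.mem_filter] at hγ
              exact hγ.2
            · intro γ hγ
              rw [hQtc, Finset.mem_filter] at hγ
              exact hγ.2
          · -- all blocks on side true
            have hallT : ∀ γ, side γ = true := by
              intro γ
              have : Qt = Finset.univ := by
                apply Finset.eq_univ_of_card
                simp [Finset.card_univ, Fintype.card_fin]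
                omega
              have hγt : γ ∈ Qt := this ▸ Finset.mem_univ γ
              rw [hQt, Finset.mem_filter] at hγt
              exact hγt.2
            have hcard : p + 0 + δ ≤ (Finset.univ : Finset (Fin (2 * p + δ))).card := by
              simp [Finset.card_univ, Fintype.card_fin]
              omega
            obtain ⟨Q1, -, hQ1c⟩ := Finset.exists_subset_card_eq hcard
            exact ⟨0, Q1, true, true, hp, hQ1c, fun γ _ => hallT γ, fun γ _ => hallT γ⟩
    obtain ⟨ℓ, Q1, b1, b2, hℓ, hq1card, hQ1side, hQ2side⟩ := hdata
    have hq2card : Q1ᶜ.card = p - ℓ := by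
      have h := Finset.card_add_card_compl Q1
      simp only [Fintype.card_fin] at h
      omega
    -- the two children
    have hcfun : ∀ (bc : Bool) i j, aR i = bc →
        (bif bc then Rt else L).eval i j = extract (interlace M (2 * p + δ)) R C i j := by
      intro bc i j hbc
      have h := hPcomp i j
      rw [show (Protocol.nodeA aR L Rt).eval i j
          = if aR i then Rt.eval i j else L.eval i j from rfl] at h
      cases bc <;> simp only [hbc] at h ⊢ <;> simpa using h
    have hcdepth : ∀ bc : Bool, (bif bc then Rt else L).depth + 1
        ≤ matD (extract (interlace M (2 * p + δ)) R C) := by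
      intro bc
      rw [← hPdepth, show (Protocol.nodeA aR L Rt).depth = max L.depth Rt.depth + 1 from rfl]
      cases bc <;> simp [Nat.succ_le_succ, le_max_left, le_max_right]
    -- column projections
    have hCpos : 1 ≤ C.card := by
      rw [hCc]
      apply Nat.ceil_pos.mpr
      positivity
    have hu1 : 1 ≤ (colProj Q1 C).card :=
      Finset.Nonempty.card_pos (colProj_nonempty hn Q1 (Finset.card_pos.mp hCpos))
    have hu : (colProj Q1 C).card ≤ n ^ Q1.card := colProj_card_le Q1 C
    have hv : (colProj Q1ᶜ C).card ≤ n ^ Q1ᶜ.card := colProj_card_le Q1ᶜ C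
    have huv : C.card ≤ (colProj Q1 C).card * (colProj Q1ᶜ C).card :=
      card_le_colProj_mul hn Q1 C
    have hCC : (n : ℝ) ^ (Q1.card + Q1ᶜ.card) * y ≤ (C.card : ℝ) := by
      have h := Finset.card_add_card_compl Q1
      simp only [Fintype.card_fin] at h
      rw [h, hCc]
      exact Nat.le_ceil _
    obtain ⟨a, ha0, ha1, hua, hva⟩ := choose_exponent hn y hy0 hy
      (colProj Q1 C).card (colProj Q1ᶜ C).card C.card hu1 hu hv huv hCC
    obtain ⟨D1, hD1sub, hD1card⟩ := Finset.exists_subset_card_eq hua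
    obtain ⟨D2, hD2sub, hD2card⟩ := Finset.exists_subset_card_eq hva
    -- apply the projection lemma to both sides
    obtain ⟨S1, hS1eq, hS1matD⟩ := master hm hn M R C Q1 chosen T'
      (fun γ _ => hchcard γ) (fun γ _ => hblk_chosen γ) b1 aR
      (fun γ hγ i hi => (hside_chosen γ i hi).trans (hQ1side γ hγ))
      (bif b1 then Rt else L) (fun i j hb => hcfun b1 i j hb) D1 hD1sub
    obtain ⟨S2, hS2eq, hS2matD⟩ := master hm hn M R C Q1ᶜ chosen T'
      (fun γ _ => hchcard γ) (fun γ _ => hblk_chosen γ) b2 aR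
      (fun γ hγ i hi => (hside_chosen γ i hi).trans (hQ2side γ hγ))
      (bif b2 then Rt else L) (fun i j hb => hcfun b2 i j hb) D2 hD2sub
    have hbr1 : bracketD M ((p + ℓ + δ : ℕ) : ℝ) x (y ^ a)
        ≤ matD (extract (interlace M (2 * p + δ)) R C) - 1 := by
      apply bracketD_le_of M _ _ _ Q1.card
        (by rw [Nat.ceil_natCast]; exact hq1card.symm) S1 D1
        (fun γ hγ => hS1eq γ hγ) hD1card
      have := hcdepth b1
      omega
    have hbr2 : bracketD M ((p - ℓ : ℕ) : ℝ) x (y ^ (1 - a))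
        ≤ matD (extract (interlace M (2 * p + δ)) R C) - 1 := by
      apply bracketD_le_of M _ _ _ Q1ᶜ.card
        (by rw [Nat.ceil_natCast]; exact hq2card.symm) S2 D2
        (fun γ hγ => hS2eq γ hγ) hD2card
      have := hcdepth b2
      omega
    refine ⟨min
        (max (bracketD M ((p + ℓ + δ : ℕ) : ℝ) x (y ^ a))
             (bracketD M ((p - ℓ : ℕ) : ℝ) x (y ^ (1 - a))))
        (bracketD M ((2 * p + δ : ℕ) : ℝ) (2 * x) (y / 2)),
      ⟨ℓ, hℓ, a, ha0, ha1, rfl⟩, ?_⟩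
    have hmax : max (bracketD M ((p + ℓ + δ : ℕ) : ℝ) x (y ^ a))
        (bracketD M ((p - ℓ : ℕ) : ℝ) x (y ^ (1 - a)))
        ≤ matD (extract (interlace M (2 * p + δ)) R C) - 1 :=
      max_le hbr1 hbr2
    have hminle := min_le_left
        (max (bracketD M ((p + ℓ + δ : ℕ) : ℝ) x (y ^ a))
             (bracketD M ((p - ℓ : ℕ) : ℝ) x (y ^ (1 - a))))
        (bracketD M ((2 * p + δ : ℕ) : ℝ) (2 * x) (y / 2))
    omega
end Digits
end

section
/- (Monotonicity Lemma) For any m × n boolean matrix M, integers 1 ≤ p' ≤ p, and reals 0 < x' ≤ x ≤ 1 and 0 < y' ≤ y ≤ 1, D(⟨M,p',x',y'⟩) ≤ D(⟨M,p,x,y⟩). -/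
-- ===================== auxiliary material =====================

namespace Protocol

/-- Precompose a protocol with input maps. -/
def comp {X Y X' Y' Z : Type} (σ : X' → X) (τ : Y' → Y) :
    Protocol X Y Z → Protocol X' Y' Z
  | leaf z => leaf z
  | nodeA a l r => nodeA (a ∘ σ) (comp σ τ l) (comp σ τ r)
  | nodeB b l r => nodeB (b ∘ τ) (comp σ τ l) (comp σ τ r)

lemma eval_comp {X Y X' Y' Z : Type} (σ : X' → X) (τ : Y' → Y)
    (P : Protocol X Y Z) (x : X') (y : Y') :
    (P.comp σ τ).eval x y = P.eval (σ x) (τ y) := by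
  induction P with
  | leaf z => rfl
  | nodeA a l r ihl ihr => simp [comp, eval, ihl, ihr]
  | nodeB b l r ihl ihr => simp [comp, eval, ihl, ihr]

lemma depth_comp {X Y X' Y' Z : Type} (σ : X' → X) (τ : Y' → Y)
    (P : Protocol X Y Z) : (P.comp σ τ).depth = P.depth := by
  induction P with
  | leaf z => rfl
  | nodeA a l r ihl ihr => simp [comp, depth, ihl, ihr]
  | nodeB b l r ihl ihr => simp [comp, depth, ihl, ihr]

end Protocol

def protB {X Y : Type} [DecidableEq Y] (g : Y → Bool) : List Y → Protocol X Y Bool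
  | [] => .leaf false
  | y₀ :: t => .nodeB (fun y => y = y₀) (protB g t) (.leaf (g y₀))

lemma eval_protB {X Y : Type} [DecidableEq Y] (g : Y → Bool) (l : List Y)
    (x : X) (y : Y) (hy : y ∈ l) : (protB g l).eval x y = g y := by
  induction l with
  | nil => simp at hy
  | cons y₀ t ih =>
    by_cases h : y = y₀
    · subst h; simp [protB, Protocol.eval]
    · have h' : y ∈ t := by
        rcases List.mem_cons.mp hy with h'' | h''
        · exact absurd h'' h
        · exact h''
      simp [protB, Protocol.eval, h, ih h']

def protA {X Y : Type} [DecidableEq X] [DecidableEq Y] (f : X → Y → Bool) (ys : List Y) :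
    List X → Protocol X Y Bool
  | [] => .leaf false
  | x₀ :: t => .nodeA (fun x => x = x₀) (protA f ys t) (protB (f x₀) ys)

lemma eval_protA {X Y : Type} [DecidableEq X] [DecidableEq Y] (f : X → Y → Bool)
    (ys : List Y) (l : List X) (x : X) (y : Y) (hx : x ∈ l) (hy : y ∈ ys) :
    (protA f ys l).eval x y = f x y := by
  induction l with
  | nil => simp at hx
  | cons x₀ t ih =>
    by_cases h : x = x₀
    · subst h; simp [protA, Protocol.eval, eval_protB (f x) ys x y hy]
    · have h' : x ∈ t := by
        rcases List.mem_cons.mp hx with h'' | h''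
        · exact absurd h'' h
        · exact h''
      simp [protA, Protocol.eval, h, ih h']

lemma exists_protocol {a b : ℕ} (f : Fin a → Fin b → Bool) :
    ∃ P : Protocol (Fin a) (Fin b) Bool, Computes P f :=
  ⟨protA f (List.finRange b) (List.finRange a),
    fun x y => eval_protA f _ _ x y (List.mem_finRange x) (List.mem_finRange y)⟩

lemma matD_le_of_maps {a b u v : ℕ} (G : Matrix (Fin a) (Fin b) Bool)
    (H : Matrix (Fin u) (Fin v) Bool) (σ : Fin a → Fin u) (τ : Fin b → Fin v)
    (hGH : ∀ i j, G i j = H (σ i) (τ j)) : matD G ≤ matD H := by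
  obtain ⟨P₁, hP₁⟩ := exists_protocol (fun i j => H i j)
  have hmem : matD H ∈ {d : ℕ | ∃ P : Protocol (Fin u) (Fin v) Bool,
      Computes P (fun i j => H i j) ∧ P.depth = d} :=
    Nat.sInf_mem ⟨P₁.depth, P₁, hP₁, rfl⟩
  obtain ⟨P₀, hP₀, hdep⟩ := hmem
  refine Nat.sInf_le ⟨P₀.comp σ τ, fun i j => ?_, ?_⟩
  · rw [Protocol.eval_comp, hP₀ (σ i) (τ j)]
    exact (hGH i j).symm
  · rw [Protocol.depth_comp, hdep]

lemma mod_pow_div_mod {c n γ p' : ℕ} (hγ : γ < p') :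
    c % n ^ p' / n ^ γ % n = c / n ^ γ % n := by
  have h1 : n ^ p' = n ^ γ * n ^ (p' - γ) := by
    rw [← pow_add]; congr 1; omega
  rw [h1, Nat.mod_mul_right_div_self,
    Nat.mod_mod_of_dvd _ (dvd_pow_self n (by omega : p' - γ ≠ 0))]

lemma matrix_congr {m n : ℕ} (M : Matrix (Fin m) (Fin n) Bool) {a a' : Fin m}
    {b b' : Fin n} (ha : (a : ℕ) = (a' : ℕ)) (hb : (b : ℕ) = (b' : ℕ)) :
    M a b = M a' b' := by
  rw [Fin.ext ha, Fin.ext hb]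

lemma interlace_apply_eq {m n : ℕ} (M : Matrix (Fin m) (Fin n) Bool)
    {p q : ℕ} (i : Fin (m * p)) (j : Fin (n ^ p)) (i' : Fin (m * q)) (j' : Fin (n ^ q))
    (h1 : (i : ℕ) % m = (i' : ℕ) % m)
    (h2 : (j : ℕ) / n ^ ((i : ℕ) / m) % n = (j' : ℕ) / n ^ ((i' : ℕ) / m) % n) :
    interlace M p i j = interlace M q i' j' := by
  simp only [interlace, Matrix.of_apply]
  exact matrix_congr M h1 h2

lemma row_base {m p : ℕ} (T : ℕ) (hTm : T ≤ m) (γ : ℕ) (hγ : γ < p) :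
    ((Finset.univ.filter fun r : Fin (m * p) => (r : ℕ) % m < T).filter
      (fun r : Fin (m * p) => m * γ ≤ (r : ℕ) ∧ (r : ℕ) < m * (γ + 1))).card = T := by
  have hmul : m * (γ + 1) = m * γ + m := by ring
  have hle : m * (γ + 1) ≤ m * p := Nat.mul_le_mul_left m hγ
  have key : ((Finset.univ.filter fun r : Fin (m * p) => (r : ℕ) % m < T).filter
      (fun r : Fin (m * p) => m * γ ≤ (r : ℕ) ∧ (r : ℕ) < m * (γ + 1))).card
      = (Finset.range T).card := by
    refine Finset.card_bij' (fun r _ => (r : ℕ) % m)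
      (fun t ht => (⟨m * γ + t, by
        have ht' : t < T := Finset.mem_range.mp ht
        omega⟩ : Fin (m * p))) ?_ ?_ ?_ ?_
    · intro r hr
      simp only [Finset.mem_filter, Finset.mem_univ, true_and] at hr
      exact Finset.mem_range.mpr hr.1
    · intro t ht
      have ht' : t < T := Finset.mem_range.mp ht
      simp only [Finset.mem_filter, Finset.mem_univ, true_and]
      refine ⟨?_, ?_, ?_⟩
      · show (m * γ + t) % m < T
        rw [Nat.mul_add_mod, Nat.mod_eq_of_lt (by omega)]
        exact ht'
      · show m * γ ≤ m * γ + t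
        omega
      · show m * γ + t < m * (γ + 1)
        omega
    · intro r hr
      simp only [Finset.mem_filter, Finset.mem_univ, true_and] at hr
      have hdiv : (r : ℕ) / m = γ := Nat.div_eq_of_lt_le
        (Nat.le_trans (Nat.le_of_eq (Nat.mul_comm γ m)) hr.2.1)
        (Nat.lt_of_lt_of_eq hr.2.2 (Nat.mul_comm m (γ + 1)))
      apply Fin.ext
      show m * γ + (r : ℕ) % m = (r : ℕ)
      rw [← hdiv]
      exact Nat.div_add_mod _ m
    · intro t ht
      have ht' : t < T := Finset.mem_range.mp ht
      show (m * γ + t) % m = t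
      rw [Nat.mul_add_mod, Nat.mod_eq_of_lt (by omega)]
  rw [key, Finset.card_range]

lemma exists_row_shrink {m p : ℕ} (p' : ℕ) (hpp : p' ≤ p) (T T' : ℕ) (hT' : T' ≤ T)
    (R : Finset (Fin (m * p)))
    (hR : ∀ γ < p, (R.filter (fun r : Fin (m * p) =>
      m * γ ≤ (r : ℕ) ∧ (r : ℕ) < m * (γ + 1))).card = T) :
    ∃ R' : Finset (Fin (m * p')),
      (∀ γ < p', (R'.filter (fun r : Fin (m * p') =>
        m * γ ≤ (r : ℕ) ∧ (r : ℕ) < m * (γ + 1))).card = T') ∧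
      ∀ s ∈ R', ∀ h : (s : ℕ) < m * p, (⟨(s : ℕ), h⟩ : Fin (m * p)) ∈ R := by
  classical
  have hSex : ∀ γ : ℕ, ∃ t ⊆ R.filter (fun r : Fin (m * p) =>
      m * γ ≤ (r : ℕ) ∧ (r : ℕ) < m * (γ + 1)),
      t.card = min T' (R.filter (fun r : Fin (m * p) =>
        m * γ ≤ (r : ℕ) ∧ (r : ℕ) < m * (γ + 1))).card :=
    fun γ => Finset.exists_subset_card_eq (min_le_right _ _)
  choose S hSsub hScard using hSex
  refine ⟨Finset.univ.filter (fun s : Fin (m * p') =>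
      ∃ h : (s : ℕ) < m * p, (⟨(s : ℕ), h⟩ : Fin (m * p)) ∈ S ((s : ℕ) / m)), ?_, ?_⟩
  · intro γ hγ
    have hcard : (S γ).card = T' := by
      rw [hScard, hR γ (lt_of_lt_of_le hγ hpp), min_eq_left hT']
    rw [← hcard]
    refine Finset.card_bij'
      (fun s _ => (⟨(s : ℕ), lt_of_lt_of_le s.isLt (Nat.mul_le_mul_left m hpp)⟩ : Fin (m * p)))
      (fun r hr => (⟨(r : ℕ),
        lt_of_lt_of_le (Finset.mem_filter.mp (hSsub γ hr)).2.2
          (Nat.mul_le_mul_left m hγ)⟩ : Fin (m * p'))) ?_ ?_ ?_ ?_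
    · intro s hs
      simp only [Finset.mem_filter, Finset.mem_univ, true_and] at hs
      obtain ⟨⟨h, hmem⟩, hlo, hhi⟩ := hs
      have hdiv : (s : ℕ) / m = γ := Nat.div_eq_of_lt_le
        (Nat.le_trans (Nat.le_of_eq (Nat.mul_comm γ m)) hlo)
        (Nat.lt_of_lt_of_eq hhi (Nat.mul_comm m (γ + 1)))
      rw [hdiv] at hmem
      exact hmem
    · intro r hr
      have hr' := Finset.mem_filter.mp (hSsub γ hr)
      have hdiv : (r : ℕ) / m = γ := Nat.div_eq_of_lt_le
        (Nat.le_trans (Nat.le_of_eq (Nat.mul_comm γ m)) hr'.2.1)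
        (Nat.lt_of_lt_of_eq hr'.2.2 (Nat.mul_comm m (γ + 1)))
      refine Finset.mem_filter.mpr ⟨Finset.mem_filter.mpr ⟨Finset.mem_univ _, ?_⟩,
        hr'.2.1, hr'.2.2⟩
      show ∃ h : (r : ℕ) < m * p, (⟨(r : ℕ), h⟩ : Fin (m * p)) ∈ S ((r : ℕ) / m)
      refine ⟨r.isLt, ?_⟩
      rw [hdiv, Fin.eta]
      exact hr
    · intro s hs
      exact Fin.ext rfl
    · intro r hr
      exact Fin.ext rfl
  · intro s hs h
    simp only [Finset.mem_filter, Finset.mem_univ, true_and] at hs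
    obtain ⟨h', hmem⟩ := hs
    exact Finset.mem_of_mem_filter _ (hSsub ((s : ℕ) / m) hmem)

lemma exists_col_base {n p : ℕ} (p' : ℕ) (hpp : p' ≤ p) (C : Finset (Fin (n ^ p))) :
    ∃ D : Finset (Fin (n ^ p')), C.card ≤ D.card * n ^ (p - p') ∧
      ∀ d ∈ D, ∃ c ∈ C, (c : ℕ) % n ^ p' = (d : ℕ) := by
  classical
  rcases C.eq_empty_or_nonempty with hC | ⟨c₀, hc₀⟩
  · exact ⟨∅, by simp [hC], by simp⟩
  have hpow : n ^ p' * n ^ (p - p') = n ^ p := by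
    rw [← pow_add, Nat.add_sub_cancel' hpp]
  have hnp : 0 < n ^ p := lt_of_le_of_lt (Nat.zero_le _) c₀.isLt
  have hq : 0 < n ^ p' := by
    rcases Nat.eq_zero_or_pos n with hn | hn
    · rcases Nat.eq_zero_or_pos p with hp0 | hp0
      · have hp'0 : p' = 0 := by omega
        simp [hp'0]
      · exfalso
        rw [hn, Nat.zero_pow (by omega)] at hnp
        exact lt_irrefl 0 hnp
    · exact pow_pos hn p'
  set f : Fin (n ^ p) → Fin (n ^ p') := fun c => ⟨(c : ℕ) % n ^ p', Nat.mod_lt _ hq⟩ with hf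
  refine ⟨C.image f, ?_, ?_⟩
  · have hbound : ∀ b ∈ C.image f, (C.filter (fun c => f c = b)).card ≤ n ^ (p - p') := by
      intro b _
      have hb : (C.filter (fun c => f c = b)).card ≤ (Finset.range (n ^ (p - p'))).card := by
        apply Finset.card_le_card_of_injOn (fun c : Fin (n ^ p) => (c : ℕ) / n ^ p')
        · intro c _
          simp only [Finset.mem_coe, Finset.mem_range]
          apply Nat.div_lt_of_lt_mul
          rw [hpow]
          exact c.isLt
        · intro c₁ h₁ c₂ h₂ hdiv
          simp only [Finset.coe_filter, Set.mem_setOf_eq] at h₁ h₂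
          have e1 : (c₁ : ℕ) % n ^ p' = (c₂ : ℕ) % n ^ p' := by
            have := congrArg Fin.val (h₁.2.trans h₂.2.symm)
            simpa [hf] using this
          simp only at hdiv
          apply Fin.ext
          have d1 := Nat.div_add_mod (c₁ : ℕ) (n ^ p')
          have d2 := Nat.div_add_mod (c₂ : ℕ) (n ^ p')
          rw [hdiv] at d1
          omega
      simpa using hb
    have hkey := Finset.card_le_mul_card_image (f := f) C (n ^ (p - p')) hbound
    calc C.card ≤ n ^ (p - p') * (C.image f).card := hkey
      _ = (C.image f).card * n ^ (p - p') := Nat.mul_comm _ _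
  · intro d hd
    obtain ⟨c, hc, hcd⟩ := Finset.mem_image.mp hd
    exact ⟨c, hc, congrArg Fin.val hcd⟩

lemma bracketD_eq {m n : ℕ} (M : Matrix (Fin m) (Fin n) Bool) (pr : ℝ) (q : ℕ)
    (hq : ⌈pr⌉₊ = q) (x y : ℝ) :
    bracketD M pr x y =
      sInf { d : ℕ | ∃ (R : Finset (Fin (m * q))) (C : Finset (Fin (n ^ q))),
        Equipartitioned m ((m : ℝ) * x) q R ∧
        C.card = ⌈(n : ℝ) ^ q * y⌉₊ ∧
        d = matD (extract (interlace M q) R C) } := by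
  subst hq
  rfl

lemma bracketD_natCast {m n : ℕ} (M : Matrix (Fin m) (Fin n) Bool) (p : ℕ) (x y : ℝ) :
    bracketD M ((p : ℕ) : ℝ) x y =
      sInf { d : ℕ | ∃ (R : Finset (Fin (m * p))) (C : Finset (Fin (n ^ p))),
        Equipartitioned m ((m : ℝ) * x) p R ∧
        C.card = ⌈(n : ℝ) ^ p * y⌉₊ ∧
        d = matD (extract (interlace M p) R C) } :=
  bracketD_eq M _ p (Nat.ceil_natCast p) x y

-- ===================== end auxiliary material =====================

theorem monotonicity {m n : ℕ} (M : Matrix (Fin m) (Fin n) Bool)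
    (p' p : ℕ) (hp' : 1 ≤ p') (hpp : p' ≤ p)
    (x' x y' y : ℝ) (hx'0 : 0 < x') (hx' : x' ≤ x) (hx : x ≤ 1)
    (hy'0 : 0 < y') (hy' : y' ≤ y) (hy : y ≤ 1) :
    bracketD M ((p' : ℕ) : ℝ) x' y' ≤ bracketD M ((p : ℕ) : ℝ) x y := by
  classical
  rw [bracketD_natCast, bracketD_natCast]
  have hT'T : ⌈(m : ℝ) * x'⌉₊ ≤ ⌈(m : ℝ) * x⌉₊ :=
    Nat.ceil_mono (mul_le_mul_of_nonneg_left hx' (Nat.cast_nonneg m))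
  have hTm : ⌈(m : ℝ) * x⌉₊ ≤ m :=
    Nat.ceil_le.mpr (mul_le_of_le_one_right (Nat.cast_nonneg m) hx)
  have hKn : ⌈(n : ℝ) ^ p * y⌉₊ ≤ n ^ p := by
    rw [Nat.ceil_le]
    push_cast
    exact mul_le_of_le_one_right (by positivity) hy
  obtain ⟨C₀, -, hC₀⟩ := Finset.exists_subset_card_eq (s := (Finset.univ : Finset (Fin (n ^ p))))
    (n := (⌈(n : ℝ) ^ p * y⌉₊)) (by simpa using hKn)
  have hne : { d : ℕ | ∃ (R : Finset (Fin (m * p))) (C : Finset (Fin (n ^ p))),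
      Equipartitioned m ((m : ℝ) * x) p R ∧
      C.card = ⌈(n : ℝ) ^ p * y⌉₊ ∧
      d = matD (extract (interlace M p) R C) }.Nonempty := by
    refine ⟨_, Finset.univ.filter (fun r : Fin (m * p) => (r : ℕ) % m < ⌈(m : ℝ) * x⌉₊),
      C₀, ?_, hC₀, rfl⟩
    intro γ hγ
    exact row_base _ hTm γ hγ
  obtain ⟨R, C, hR, hCcard, hd⟩ := Nat.sInf_mem hne
  rw [hd]
  -- shrink the rows
  obtain ⟨R', hR'eq, hR'mem⟩ := exists_row_shrink p' hpp _ _ hT'T R hR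
  -- shrink the columns
  obtain ⟨D, hDcard, hDmem⟩ := exists_col_base p' hpp C
  have hK'D : ⌈(n : ℝ) ^ p' * y'⌉₊ ≤ D.card := by
    rcases Nat.eq_zero_or_pos n with hn | hn
    · subst hn
      have h0 : ((0 : ℕ) : ℝ) ^ p' = 0 := by
        rw [Nat.cast_zero, zero_pow (by omega : p' ≠ 0)]
      rw [h0, zero_mul, Nat.ceil_zero]
      exact Nat.zero_le _
    · rw [Nat.ceil_le]
      have h1 : (n : ℝ) ^ p * y ≤ (C.card : ℝ) := by
        rw [hCcard]; exact Nat.le_ceil _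
      have h2 : (C.card : ℝ) ≤ (D.card : ℝ) * (n : ℝ) ^ (p - p') := by
        exact_mod_cast hDcard
      have hpow : (n : ℝ) ^ p' * (n : ℝ) ^ (p - p') = (n : ℝ) ^ p := by
        rw [← pow_add]; congr 1; omega
      have hnR : (0 : ℝ) < (n : ℝ) := by exact_mod_cast hn
      have hpos : (0 : ℝ) < (n : ℝ) ^ (p - p') := by positivity
      refine le_of_mul_le_mul_right ?_ hpos
      calc (n : ℝ) ^ p' * y' * (n : ℝ) ^ (p - p')
          = (n : ℝ) ^ p * y' := by rw [mul_right_comm, hpow]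
        _ ≤ (n : ℝ) ^ p * y := mul_le_mul_of_nonneg_left hy' (by positivity)
        _ ≤ (C.card : ℝ) := h1
        _ ≤ (D.card : ℝ) * (n : ℝ) ^ (p - p') := h2
  obtain ⟨C', hC'sub, hC'card⟩ := Finset.exists_subset_card_eq (s := D) hK'D
  have hC'mem : ∀ d ∈ C', ∃ c ∈ C, (c : ℕ) % n ^ p' = (d : ℕ) :=
    fun d hd' => hDmem d (hC'sub hd')
  choose cc hccC hccmod using hC'mem
  refine le_trans (Nat.sInf_le ?_) (matD_le_of_maps (extract (interlace M p') R' C')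
    (extract (interlace M p) R C) ?_ ?_ ?_)
  · exact ⟨R', C', hR'eq, hC'card, rfl⟩
  · -- σ
    exact fun i =>
      (R.orderIsoOfFin rfl).symm
        ⟨⟨((R'.orderIsoOfFin rfl i : Fin (m * p')) : ℕ),
          lt_of_lt_of_le (R'.orderIsoOfFin rfl i).1.isLt (Nat.mul_le_mul_left m hpp)⟩,
          hR'mem _ (R'.orderIsoOfFin rfl i).2 _⟩
  · -- τ
    exact fun j =>
      (C.orderIsoOfFin rfl).symm
        ⟨cc ((C'.orderIsoOfFin rfl j : Fin (n ^ p'))) (C'.orderIsoOfFin rfl j).2,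
          hccC _ _⟩
  · intro i j
    simp only [extract, Matrix.of_apply, OrderIso.apply_symm_apply]
    apply interlace_apply_eq
    · rfl
    · have hγ : ((R'.orderIsoOfFin rfl i : Fin (m * p')) : ℕ) / m < p' :=
        Nat.div_lt_of_lt_mul (R'.orderIsoOfFin rfl i).1.isLt
      simp only [Fin.val_mk]
      rw [← hccmod _ (C'.orderIsoOfFin rfl j).2]
      exact mod_pow_div_mod hγ
end

section
/- (Projection Lemma) Let A be an m × n boolean matrix and p a positive integer, let R ⊆ {0,…,mp−1} and C ⊆ {0,…,n^p−1} be selections of rows and columns of A^{⊘p}, and let Q ⊆ {0,…,p−1}. If (S,D) is the Q-projection of (R,C), then A^{⊘|Q|}[S,D] is a subgame of A^{⊘p}[R,C]. -/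
private lemma digitsEq {n : ℕ} : ∀ ℓ a b, a < n ^ ℓ → b < n ^ ℓ →
    (∀ γ, γ < ℓ → a / n ^ γ % n = b / n ^ γ % n) → a = b := by
  intro ℓ
  induction ℓ with
  | zero => intro a b ha hb _; simp at ha hb; omega
  | succ k ih =>
    intro a b ha hb h
    have hn : 0 < n := by
      rcases Nat.eq_zero_or_pos n with h0 | h0
      · subst h0; simp at ha
      · exact h0
    have h0 := h 0 (Nat.succ_pos k)
    simp at h0
    have hpow : n ^ (k + 1) = n * n ^ k := by rw [pow_succ, mul_comm]
    have ha' : a < n * n ^ k := by rwa [hpow] at ha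
    have hb' : b < n * n ^ k := by rwa [hpow] at hb
    have hd : a / n = b / n := by
      apply ih
      · exact Nat.div_lt_of_lt_mul ha'
      · exact Nat.div_lt_of_lt_mul hb'
      · intro γ hγ
        have hγ' := h (γ + 1) (by omega)
        have hpow2 : n ^ (γ + 1) = n * n ^ γ := by rw [pow_succ, mul_comm]
        rwa [hpow2, ← Nat.div_div_eq_div_mul, ← Nat.div_div_eq_div_mul] at hγ'
    have h1 := Nat.div_add_mod a n
    have h2 := Nat.div_add_mod b n
    have h3 : n * (a / n) = n * (b / n) := by rw [hd]
    omega

theorem projection_lemma {m n : ℕ} (A : Matrix (Fin m) (Fin n) Bool)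
    (p : ℕ) (hp : 0 < p)
    (R : Finset (Fin (m * p))) (C : Finset (Fin (n ^ p))) (Q : Finset (Fin p)) :
    Subgame (extract (interlace A Q.card) (rowProj Q R) (colProj Q C))
            (extract (interlace A p) R C) := by
  classical
  have hmemS : ∀ i : Fin (rowProj Q R).card,
      ∃ r ∈ R, (r : ℕ) % m = (((rowProj Q R).orderIsoOfFin rfl i).1 : ℕ) % m ∧
        (r : ℕ) / m = ((Q.orderIsoOfFin rfl ⟨(((rowProj Q R).orderIsoOfFin rfl i).1 : ℕ) / m,
          Nat.div_lt_of_lt_mul ((rowProj Q R).orderIsoOfFin rfl i).1.isLt⟩).1 : ℕ) := by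
    intro i
    have h := ((rowProj Q R).orderIsoOfFin rfl i).2
    exact (Finset.mem_filter.mp h).2
  choose f hfR hfmod hfdiv using hmemS
  have hmemD : ∀ j : Fin (colProj Q C).card,
      ∃ c ∈ C, ∀ γ : Fin Q.card,
        (((colProj Q C).orderIsoOfFin rfl j).1 : ℕ) / n ^ (γ : ℕ) % n =
          (c : ℕ) / n ^ (((Q.orderIsoOfFin rfl γ).1 : ℕ)) % n := by
    intro j
    have h := ((colProj Q C).orderIsoOfFin rfl j).2
    exact (Finset.mem_filter.mp h).2
  choose g hgC hgdig using hmemD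
  refine ⟨fun i => (R.orderIsoOfFin rfl).symm ⟨f i, hfR i⟩,
          fun j => (C.orderIsoOfFin rfl).symm ⟨g j, hgC j⟩, ?_, ?_, ?_⟩
  · intro i i' hii
    have hf : f i = f i' := by
      have h1 := (R.orderIsoOfFin rfl).symm.injective hii
      exact Subtype.mk_eq_mk.mp h1
    -- show the underlying selected rows are equal
    have hsval : (((rowProj Q R).orderIsoOfFin rfl i).1 : ℕ)
        = (((rowProj Q R).orderIsoOfFin rfl i').1 : ℕ) := by
      have hmod : (((rowProj Q R).orderIsoOfFin rfl i).1 : ℕ) % m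
          = (((rowProj Q R).orderIsoOfFin rfl i').1 : ℕ) % m := by
        rw [← hfmod i, ← hfmod i', hf]
      have hqeq : ((Q.orderIsoOfFin rfl ⟨(((rowProj Q R).orderIsoOfFin rfl i).1 : ℕ) / m,
            Nat.div_lt_of_lt_mul ((rowProj Q R).orderIsoOfFin rfl i).1.isLt⟩).1 : ℕ)
          = ((Q.orderIsoOfFin rfl ⟨(((rowProj Q R).orderIsoOfFin rfl i').1 : ℕ) / m,
            Nat.div_lt_of_lt_mul ((rowProj Q R).orderIsoOfFin rfl i').1.isLt⟩).1 : ℕ) := by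
        rw [← hfdiv i, ← hfdiv i', hf]
      have hdiv : (((rowProj Q R).orderIsoOfFin rfl i).1 : ℕ) / m
          = (((rowProj Q R).orderIsoOfFin rfl i').1 : ℕ) / m := by
        have h2 : (Q.orderIsoOfFin rfl ⟨(((rowProj Q R).orderIsoOfFin rfl i).1 : ℕ) / m,
              Nat.div_lt_of_lt_mul ((rowProj Q R).orderIsoOfFin rfl i).1.isLt⟩)
            = (Q.orderIsoOfFin rfl ⟨(((rowProj Q R).orderIsoOfFin rfl i').1 : ℕ) / m,
              Nat.div_lt_of_lt_mul ((rowProj Q R).orderIsoOfFin rfl i').1.isLt⟩) :=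
          Subtype.ext (Fin.ext hqeq)
        have h3 := (Q.orderIsoOfFin rfl).injective h2
        exact congrArg Fin.val h3
      have e1 := Nat.div_add_mod (((rowProj Q R).orderIsoOfFin rfl i).1 : ℕ) m
      have e2 := Nat.div_add_mod (((rowProj Q R).orderIsoOfFin rfl i').1 : ℕ) m
      have e3 : m * ((((rowProj Q R).orderIsoOfFin rfl i).1 : ℕ) / m)
          = m * ((((rowProj Q R).orderIsoOfFin rfl i').1 : ℕ) / m) := by rw [hdiv]
      omega
    have := ((rowProj Q R).orderIsoOfFin rfl).injective (Subtype.ext (Fin.ext hsval))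
    exact this
  · intro j j' hjj
    have hg : g j = g j' := by
      have h1 := (C.orderIsoOfFin rfl).symm.injective hjj
      exact Subtype.mk_eq_mk.mp h1
    have hdval : (((colProj Q C).orderIsoOfFin rfl j).1 : ℕ)
        = (((colProj Q C).orderIsoOfFin rfl j').1 : ℕ) := by
      apply digitsEq Q.card
      · exact ((colProj Q C).orderIsoOfFin rfl j).1.isLt
      · exact ((colProj Q C).orderIsoOfFin rfl j').1.isLt
      · intro γ hγ
        rw [hgdig j ⟨γ, hγ⟩, hgdig j' ⟨γ, hγ⟩, hg]
    exact ((colProj Q C).orderIsoOfFin rfl).injective (Subtype.ext (Fin.ext hdval))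
  · intro i j
    show extract (interlace A Q.card) (rowProj Q R) (colProj Q C) i j
        = extract (interlace A p) R C _ _
    simp only [extract, interlace, Matrix.of_apply]
    rw [OrderIso.apply_symm_apply, OrderIso.apply_symm_apply]
    congr 1
    · exact Fin.ext (hfmod i).symm
    · apply Fin.ext
      show (((colProj Q C).orderIsoOfFin rfl j).1 : ℕ)
          / n ^ ((((rowProj Q R).orderIsoOfFin rfl i).1 : ℕ) / m) % n
        = ((g j : ℕ)) / n ^ ((f i : ℕ) / m) % n
      rw [hfdiv i]
      exact hgdig j ⟨(((rowProj Q R).orderIsoOfFin rfl i).1 : ℕ) / m,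
        Nat.div_lt_of_lt_mul ((rowProj Q R).orderIsoOfFin rfl i).1.isLt⟩
end

section
/- (Balancing Lemma) Let A be an m × n boolean matrix and p a positive integer, let R ⊆ {0,…,mp−1} and C ⊆ {0,…,n^p−1} be selections of rows and columns of A^{⊘p}, and let 0 ≤ T < m be a real. Set ℓ = ⌈p·(1 − (1 − |R|/(pm))/(1 − T/m))⌉ and assume ℓ > 0. Then there exist S ⊆ {0,…,mℓ−1} and D ⊆ {0,…,n^ℓ−1} such that S is m,T,ℓ-equipartitioned, |D| ≥ |C|/n^{p−ℓ}, and A^{⊘ℓ}[S,D] is a subgame of A^{⊘p}[R,C]. -/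
lemma digits_sum_lt (n : ℕ) (hn : 0 < n) (f : ℕ → ℕ) :
    ∀ k : ℕ, (∑ i ∈ Finset.range k, (f i % n) * n ^ i) < n ^ k := by
  intro k
  induction k with
  | zero => simpa using hn
  | succ k ih =>
    rw [Finset.sum_range_succ, pow_succ]
    have h1 : f k % n + 1 ≤ n := Nat.mod_lt _ hn
    calc (∑ i ∈ Finset.range k, (f i % n) * n ^ i) + (f k % n) * n ^ k
        < n ^ k + (f k % n) * n ^ k := by omega
      _ = (f k % n + 1) * n ^ k := by ring
      _ ≤ n * n ^ k := Nat.mul_le_mul_right _ h1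
      _ = n ^ k * n := by ring

lemma digits_sum_digit (n : ℕ) (hn : 0 < n) (f : ℕ → ℕ) :
    ∀ k : ℕ, ∀ i < k, (∑ j ∈ Finset.range k, (f j % n) * n ^ j) / n ^ i % n = f i % n := by
  intro k
  induction k with
  | zero => omega
  | succ k ih =>
    intro i hi
    rw [Finset.sum_range_succ]
    rcases Nat.lt_or_ge i k with h | h
    · have hrw : (f k % n) * n ^ k = ((f k % n) * n ^ (k - i - 1) * n) * n ^ i := by
        rw [mul_assoc, mul_assoc, ← pow_succ', ← pow_add]
        congr 2
        omega
      rw [hrw, Nat.add_mul_div_right _ _ (Nat.pow_pos hn),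
        Nat.add_mul_mod_self_right]
      exact ih i h
    · have hik : i = k := by omega
      subst hik
      rw [Nat.add_mul_div_right _ _ (Nat.pow_pos hn),
        Nat.div_eq_of_lt (digits_sum_lt n hn f i), Nat.zero_add,
        Nat.mod_mod_of_dvd _ dvd_rfl]

lemma digits_ext (n : ℕ) : ∀ (p : ℕ) (c c' : ℕ), c < n ^ p → c' < n ^ p →
    (∀ i < p, c / n ^ i % n = c' / n ^ i % n) → c = c' := by
  intro p
  induction p with
  | zero => intro c c' hc hc' _; simp at hc hc'; omega
  | succ p ih =>
    intro c c' hc hc' h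
    have hn : 0 < n := by
      rcases Nat.eq_zero_or_pos n with h0 | h0
      · simp [h0] at hc
      · exact h0
    have h0 : c % n = c' % n := by simpa using h 0 (Nat.succ_pos p)
    have hdiv : c / n = c' / n := by
      apply ih
      · exact Nat.div_lt_of_lt_mul (by rw [← pow_succ']; exact hc)
      · exact Nat.div_lt_of_lt_mul (by rw [← pow_succ']; exact hc')
      · intro i hi
        have := h (i + 1) (by omega)
        rw [Nat.div_div_eq_div_mul, Nat.div_div_eq_div_mul]
        rwa [pow_succ'] at this
    calc c = n * (c / n) + c % n := (Nat.div_add_mod c n).symm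
      _ = n * (c' / n) + c' % n := by rw [hdiv, h0]
      _ = c' := Nat.div_add_mod c' n


lemma arith_key (p q : ℕ) (m T r : ℝ) (hm : 0 < m) (hT0 : 0 ≤ T) (hTm : T < m)
    (hqp : (q : ℝ) ≤ p) (hp : 0 < (p : ℝ))
    (hr : r ≤ q * m + ((p : ℝ) - q) * T) :
    (p : ℝ) * (1 - (1 - r / ((p : ℝ) * m)) / (1 - T / m)) ≤ q := by
  have hx : (0 : ℝ) < 1 - T / m := by
    rw [sub_pos, div_lt_one hm]; exact hTm
  have h3 : (p : ℝ) * (1 - r / ((p : ℝ) * m)) = p - r / m := by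
    field_simp
  have expand : (p : ℝ) * (1 - (1 - r / ((p : ℝ) * m)) / (1 - T / m))
      = p - ((p : ℝ) - r / m) / (1 - T / m) := by
    rw [mul_sub, mul_one, mul_div_assoc', h3]
  have h2 : (p : ℝ) - q ≤ ((p : ℝ) - r / m) / (1 - T / m) := by
    rw [le_div_iff₀ hx]
    have e1 : r / m * m = r := div_mul_cancel₀ _ hm.ne'
    have e2 : T / m * m = T := div_mul_cancel₀ _ hm.ne'
    nlinarith [e1, e2, hm]
  rw [expand]
  linarith


lemma divmod_ext {a b m : ℕ} (h1 : a / m = b / m) (h2 : a % m = b % m) : a = b := by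
  calc a = m * (a / m) + a % m := (Nat.div_add_mod a m).symm
    _ = m * (b / m) + b % m := by rw [h1, h2]
    _ = b := Nat.div_add_mod b m

open Finset in
lemma count_heavy {m p : ℕ} (hm : 0 < m) (R : Finset (Fin (m * p))) (t : ℕ) (ht : 0 < t) :
    R.card ≤ (univ.filter (fun γ : Fin p =>
        t ≤ (R.filter (fun r : Fin (m * p) => (r : ℕ) / m = (γ : ℕ))).card)).card * m
      + (p - (univ.filter (fun γ : Fin p =>
        t ≤ (R.filter (fun r : Fin (m * p) => (r : ℕ) / m = (γ : ℕ))).card)).card) * (t - 1) := by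
  classical
  set P : Fin p → Prop := fun γ => t ≤ (R.filter (fun r : Fin (m * p) => (r : ℕ) / m = (γ : ℕ))).card with hP
  have hsum : R.card = ∑ γ : Fin p, (R.filter (fun r : Fin (m * p) => (r : ℕ) / m = (γ : ℕ))).card := by
    rw [Finset.card_eq_sum_card_fiberwise
      (f := fun r : Fin (m * p) => (⟨(r : ℕ) / m, Nat.div_lt_of_lt_mul r.isLt⟩ : Fin p))
      (t := univ) (fun r _ => mem_univ _)]
    apply Finset.sum_congr rfl
    intro γ _
    congr 1
    apply Finset.filter_congr
    intro r _
    simp [Fin.ext_iff]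
  have hblk_le : ∀ γ : Fin p, (R.filter (fun r : Fin (m * p) => (r : ℕ) / m = (γ : ℕ))).card ≤ m := by
    intro γ
    have h := Finset.card_le_card_of_injOn
      (s := R.filter (fun r : Fin (m * p) => (r : ℕ) / m = (γ : ℕ))) (t := univ)
      (fun r : Fin (m * p) => (⟨(r : ℕ) % m, Nat.mod_lt _ hm⟩ : Fin m))
      (fun r _ => mem_univ _) ?_
    · simpa using h
    · intro a ha b hb hab
      simp only [coe_filter, Set.mem_setOf_eq] at ha hb
      simp only [Fin.mk.injEq] at hab
      exact Fin.ext (divmod_ext (ha.2.trans hb.2.symm) hab)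
  have hsplit := Finset.sum_filter_add_sum_filter_not univ P
    (fun γ => (R.filter (fun r : Fin (m * p) => (r : ℕ) / m = (γ : ℕ))).card)
  have h1 : ∑ γ ∈ univ.filter P, (R.filter (fun r : Fin (m * p) => (r : ℕ) / m = (γ : ℕ))).card
      ≤ (univ.filter P).card * m :=
    (Finset.sum_le_card_nsmul _ _ m (fun γ _ => hblk_le γ)).trans (by simp)
  have h2 : ∑ γ ∈ univ.filter (fun γ => ¬ P γ),
        (R.filter (fun r : Fin (m * p) => (r : ℕ) / m = (γ : ℕ))).card
      ≤ (univ.filter (fun γ => ¬ P γ)).card * (t - 1) :=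
    (Finset.sum_le_card_nsmul _ _ (t - 1) (fun γ hγ => by
      simp only [mem_filter, hP, not_le] at hγ
      omega)).trans (by simp)
  have hl : (univ.filter (fun γ => ¬ P γ)).card = p - (univ.filter P).card := by
    have h3 := Finset.card_filter_add_card_filter_not (s := (univ : Finset (Fin p))) (p := P)
    simp only [Finset.card_univ, Fintype.card_fin] at h3
    omega
  calc R.card = _ + _ := hsum ▸ hsplit.symm
    _ ≤ (univ.filter P).card * m + (p - (univ.filter P).card) * (t - 1) := by
        rw [← hl]; exact Nat.add_le_add h1 h2

lemma div_eq_blk {s m γ : ℕ} (h1 : m * γ ≤ s) (h2 : s < m * (γ + 1)) : s / m = γ :=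
  Nat.div_eq_of_lt_le (by rwa [mul_comm γ m]) (by rwa [mul_comm (γ + 1) m])

open Finset in
lemma exists_S {m p ℓ : ℕ} (hm : 0 < m) (T : ℝ) (R : Finset (Fin (m * p)))
    (Q : Finset (Fin p)) (hQ : Q.card = ℓ)
    (hheavy : ∀ x ∈ Q, ⌈T⌉₊ ≤ (R.filter (fun r : Fin (m * p) => (r : ℕ) / m = (x : ℕ))).card) :
    ∃ S : Finset (Fin (m * ℓ)), Equipartitioned m T ℓ S ∧
      ∀ s ∈ S, ∃ r ∈ R, (r : ℕ) % m = (s : ℕ) % m ∧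
        ∀ h : (s : ℕ) / m < ℓ,
          (r : ℕ) / m = (((Q.orderIsoOfFin hQ ⟨(s : ℕ) / m, h⟩ : {x // x ∈ Q}) : Fin p) : ℕ) := by
  classical
  set e := Q.orderIsoOfFin hQ with he
  choose W hWsub hWcard using fun γ' : Fin ℓ =>
    Finset.exists_subset_card_eq (hheavy (e γ').1 (e γ').2)
  have hWmem : ∀ (γ' : Fin ℓ) (r : Fin (m * p)), r ∈ W γ' →
      r ∈ R ∧ (r : ℕ) / m = (((e γ' : {x // x ∈ Q}) : Fin p) : ℕ) := by
    intro γ' r hr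
    have := hWsub γ' hr
    simpa using this
  set Wres : Fin ℓ → Finset (Fin m) :=
    fun γ' => (W γ').image (fun r : Fin (m * p) => (⟨(r : ℕ) % m, Nat.mod_lt _ hm⟩ : Fin m))
    with hWres
  have hWres_card : ∀ γ', (Wres γ').card = ⌈T⌉₊ := by
    intro γ'
    rw [hWres]
    rw [Finset.card_image_of_injOn, hWcard]
    intro a ha b hb hab
    simp only [Fin.mk.injEq] at hab
    exact Fin.ext (divmod_ext (((hWmem γ' a ha).2).trans ((hWmem γ' b hb).2).symm) hab)
  refine ⟨Finset.univ.filter (fun s : Fin (m * ℓ) =>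
      (⟨(s : ℕ) % m, Nat.mod_lt _ hm⟩ : Fin m) ∈
        Wres ⟨(s : ℕ) / m, Nat.div_lt_of_lt_mul s.isLt⟩), ?_, ?_⟩
  · intro γ hγ
    rw [← hWres_card ⟨γ, hγ⟩]
    refine Finset.card_bij (fun (s : Fin (m * ℓ)) (_ : s ∈ _) => (⟨(s : ℕ) % m, Nat.mod_lt _ hm⟩ : Fin m)) ?_ ?_ ?_
    · intro s hs
      simp only [mem_filter, mem_univ, true_and] at hs
      obtain ⟨hsW, hlo, hhi⟩ := hs
      have hdiv : (s : ℕ) / m = γ := div_eq_blk hlo hhi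
      have : (⟨(s : ℕ) / m, Nat.div_lt_of_lt_mul s.isLt⟩ : Fin ℓ) = ⟨γ, hγ⟩ := Fin.ext hdiv
      rwa [this] at hsW
    · intro a ha b hb hab
      simp only [mem_filter, mem_univ, true_and] at ha hb
      simp only [Fin.mk.injEq] at hab
      have hda : (a : ℕ) / m = γ := div_eq_blk ha.2.1 ha.2.2
      have hdb : (b : ℕ) / m = γ := div_eq_blk hb.2.1 hb.2.2
      exact Fin.ext (divmod_ext (hda.trans hdb.symm) hab)
    · intro b hb
      have hball : m * γ + (b : ℕ) < m * ℓ := by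
        have h1 : m * γ + (b : ℕ) < m * (γ + 1) := by rw [mul_add, mul_one]; omega
        have h2 : m * (γ + 1) ≤ m * ℓ := Nat.mul_le_mul_left m hγ
        omega
      refine ⟨⟨m * γ + (b : ℕ), hball⟩, ?_, ?_⟩
      · have hdiv : (m * γ + (b : ℕ)) / m = γ := by
          rw [Nat.mul_add_div hm, Nat.div_eq_of_lt b.isLt, add_zero]
        have hmod : (m * γ + (b : ℕ)) % m = (b : ℕ) := by
          rw [Nat.mul_add_mod, Nat.mod_eq_of_lt b.isLt]
        simp only [mem_filter, mem_univ, true_and]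
        refine ⟨?_, by omega, by rw [mul_add, mul_one]; omega⟩
        have h1 : (⟨(m * γ + (b : ℕ)) % m, Nat.mod_lt _ hm⟩ : Fin m) = b := Fin.ext hmod
        have h2 : (⟨(m * γ + (b : ℕ)) / m, by omega⟩ : Fin ℓ) = ⟨γ, hγ⟩ := Fin.ext hdiv
        rw [h1]
        convert hb using 2
      · exact Fin.ext (by simp [Nat.mul_add_mod, Nat.mod_eq_of_lt b.isLt])
  · intro s hs
    simp only [mem_filter, mem_univ, true_and] at hs
    rw [hWres, Finset.mem_image] at hs
    obtain ⟨r, hrW, hr⟩ := hs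
    simp only [Fin.mk.injEq] at hr
    obtain ⟨hrR, hrdiv⟩ := hWmem _ r hrW
    exact ⟨r, hrR, hr, fun h => hrdiv⟩

open Finset in
lemma exists_D {n p ℓ : ℕ} (hp : 0 < p) (C : Finset (Fin (n ^ p)))
    (Q : Finset (Fin p)) (hQ : Q.card = ℓ) :
    ∃ (D : Finset (Fin (n ^ ℓ))) (g : Fin D.card → Fin (n ^ p)),
      C.card ≤ n ^ (p - ℓ) * D.card ∧
      (∀ j, g j ∈ C) ∧ Function.Injective g ∧
      ∀ (j : Fin D.card) (γ' : Fin ℓ),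
        ((D.orderIsoOfFin rfl j : Fin (n ^ ℓ)) : ℕ) / n ^ (γ' : ℕ) % n
          = ((g j : Fin (n ^ p)) : ℕ) /
              n ^ (((Q.orderIsoOfFin hQ γ' : {x // x ∈ Q}) : Fin p) : ℕ) % n := by
  classical
  rcases Nat.eq_zero_or_pos n with hn | hn
  · -- n = 0 : everything empty
    have hC : C = ∅ := by
      apply Finset.eq_empty_of_forall_notMem
      intro c _
      have h1 := c.isLt
      have h2 : n ^ p = 0 := by rw [hn]; exact Nat.zero_pow hp
      omega
    refine ⟨∅, fun j => ?_, ?_, fun j => ?_, fun j => ?_, fun j => ?_⟩ <;>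
      first
        | exact absurd j.isLt (by simp)
        | simp [hC]
  · -- n > 0
    set eV : ℕ → ℕ := fun i =>
      if h : i < ℓ then (((Q.orderIsoOfFin hQ ⟨i, h⟩ : {x // x ∈ Q}) : Fin p) : ℕ) else 0
      with heV
    set φ : Fin (n ^ p) → Fin (n ^ ℓ) := fun c =>
      ⟨∑ i ∈ Finset.range ℓ, ((c : ℕ) / n ^ (eV i) % n) * n ^ i, digits_sum_lt n hn _ ℓ⟩
      with hφ
    have hφdig : ∀ (c : Fin (n ^ p)) (γ' : Fin ℓ),
        ((φ c : Fin (n ^ ℓ)) : ℕ) / n ^ (γ' : ℕ) % n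
          = (c : ℕ) / n ^ (((Q.orderIsoOfFin hQ γ' : {x // x ∈ Q}) : Fin p) : ℕ) % n := by
      intro c γ'
      have h1 := digits_sum_digit n hn (fun i => (c : ℕ) / n ^ (eV i)) ℓ γ' γ'.isLt
      have h2 : eV (γ' : ℕ) = (((Q.orderIsoOfFin hQ γ' : {x // x ∈ Q}) : Fin p) : ℕ) := by
        rw [heV]
        simp [γ'.isLt]
      rw [hφ]
      simp only
      rw [h1, h2]
    -- the complement positions
    set Q' : Finset (Fin p) := Qᶜ with hQ'
    have hQ'card : Q'.card = p - ℓ := by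
      rw [hQ', Finset.card_compl, Fintype.card_fin, hQ]
    set eV' : ℕ → ℕ := fun i =>
      if h : i < Q'.card then (((Q'.orderIsoOfFin rfl ⟨i, h⟩ : {x // x ∈ Q'}) : Fin p) : ℕ) else 0
      with heV'
    set ψ : Fin (n ^ p) → ℕ := fun c =>
      ∑ i ∈ Finset.range Q'.card, ((c : ℕ) / n ^ (eV' i) % n) * n ^ i with hψ
    -- fibers of φ are small
    have hfiber : ∀ b ∈ C.image φ, (C.filter (fun c => φ c = b)).card ≤ n ^ (p - ℓ) := by
      intro b _
      have hmaps : ∀ c ∈ C.filter (fun c => φ c = b), ψ c ∈ Finset.range (n ^ (p - ℓ)) := by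
        intro c _
        rw [Finset.mem_range, ← hQ'card]
        exact digits_sum_lt n hn _ _
      have hinj : Set.InjOn ψ (C.filter (fun c => φ c = b)) := by
        intro c hc c' hc' hcc
        simp only [coe_filter, Set.mem_setOf_eq] at hc hc'
        have hφeq : φ c = φ c' := hc.2.trans hc'.2.symm
        apply Fin.ext
        apply digits_ext n p _ _ c.isLt c'.isLt
        intro i hi
        by_cases hiQ : (⟨i, hi⟩ : Fin p) ∈ Q
        · obtain ⟨γ', hγ'⟩ := (Q.orderIsoOfFin hQ).surjective ⟨⟨i, hi⟩, hiQ⟩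
          have h1 := hφdig c γ'
          have h2 := hφdig c' γ'
          rw [hφeq] at h1
          rw [hγ'] at h1 h2
          exact h1.symm.trans h2
        · have hiQ' : (⟨i, hi⟩ : Fin p) ∈ Q' := by rw [hQ']; simpa using hiQ
          obtain ⟨γ', hγ'⟩ := (Q'.orderIsoOfFin rfl).surjective ⟨⟨i, hi⟩, hiQ'⟩
          have heVv : eV' (γ' : ℕ) = i := by
            rw [heV']
            simp only [γ'.isLt, dif_pos]
            rw [Fin.eta, hγ']
          have h1 := digits_sum_digit n hn (fun i => (c : ℕ) / n ^ (eV' i)) Q'.card γ' γ'.isLt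
          have h2 := digits_sum_digit n hn (fun i => (c' : ℕ) / n ^ (eV' i)) Q'.card γ' γ'.isLt
          rw [heVv] at h1 h2
          rw [← h1, ← h2]
          exact congrArg (fun z => z / n ^ (γ' : ℕ) % n) hcc
      calc (C.filter (fun c => φ c = b)).card ≤ (Finset.range (n ^ (p - ℓ))).card :=
            Finset.card_le_card_of_injOn ψ hmaps hinj
        _ = n ^ (p - ℓ) := Finset.card_range _
    have hcard : C.card ≤ n ^ (p - ℓ) * (C.image φ).card :=
      Finset.card_le_mul_card_image C _ hfiber
    -- choose preimages
    have hpre : ∀ j : Fin (C.image φ).card,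
        ∃ c : Fin (n ^ p), c ∈ C ∧ φ c = ((C.image φ).orderIsoOfFin rfl j : Fin (n ^ ℓ)) := by
      intro j
      have := ((C.image φ).orderIsoOfFin rfl j).2
      rw [Finset.mem_image] at this
      obtain ⟨c, hc, hcφ⟩ := this
      exact ⟨c, hc, hcφ⟩
    choose g hgC hgφ using hpre
    refine ⟨C.image φ, g, hcard, hgC, ?_, ?_⟩
    · intro j j' hjj
      have : ((C.image φ).orderIsoOfFin rfl j : Fin (n ^ ℓ))
          = ((C.image φ).orderIsoOfFin rfl j' : Fin (n ^ ℓ)) := by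
        rw [← hgφ j, ← hgφ j', hjj]
      exact ((C.image φ).orderIsoOfFin rfl).injective (Subtype.ext this)
    · intro j γ'
      rw [← hgφ j]
      exact hφdig (g j) γ'

theorem balancing_lemma {m n : ℕ} (A : Matrix (Fin m) (Fin n) Bool)
    (p : ℕ) (hp : 0 < p)
    (R : Finset (Fin (m * p))) (C : Finset (Fin (n ^ p)))
    (T : ℝ) (hT0 : 0 ≤ T) (hTm : T < (m : ℝ))
    (ℓ : ℕ)
    (hℓ : ℓ = ⌈(p : ℝ) * (1 - (1 - (R.card : ℝ) / ((p : ℝ) * (m : ℝ))) / (1 - T / (m : ℝ)))⌉₊)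
    (hℓpos : 0 < ℓ) :
    ∃ (S : Finset (Fin (m * ℓ))) (D : Finset (Fin (n ^ ℓ))),
      Equipartitioned m T ℓ S ∧
      (C.card : ℝ) / (n : ℝ) ^ (p - ℓ) ≤ (D.card : ℝ) ∧
      Subgame (extract (interlace A ℓ) S D) (extract (interlace A p) R C) := by
  classical
  have hmR : (0 : ℝ) < m := lt_of_le_of_lt hT0 hTm
  have hm : 0 < m := by exact_mod_cast hmR
  have hpR : (0 : ℝ) < p := by exact_mod_cast hp
  set heavy := Finset.univ.filter (fun γ : Fin p =>
    ⌈T⌉₊ ≤ (R.filter (fun r : Fin (m * p) => (r : ℕ) / m = (γ : ℕ))).card) with hheavy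
  set q := heavy.card with hqdef
  have hqp : q ≤ p := by
    calc q ≤ (Finset.univ : Finset (Fin p)).card :=
          Finset.card_le_card (Finset.subset_univ _)
      _ = p := Finset.card_fin p
  have hcount : (R.card : ℝ) ≤ q * m + ((p : ℝ) - q) * T := by
    rcases Nat.eq_zero_or_pos ⌈T⌉₊ with ht0 | ht1
    · have hqq : q = p := by
        rw [hqdef, hheavy, Finset.filter_true_of_mem (fun γ _ => by simp [ht0])]
        simp
      have hRle : R.card ≤ m * p := by
        simpa using Finset.card_le_univ R
      have hc : (R.card : ℝ) ≤ (m : ℝ) * p := by exact_mod_cast hRle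
      rw [hqq]
      have he : ((p : ℝ) - (p : ℝ)) * T = 0 := by ring
      rw [he]
      linarith
    · have hnat := count_heavy hm R ⌈T⌉₊ ht1
      have ht1R : ((⌈T⌉₊ - 1 : ℕ) : ℝ) ≤ T := by
        have h2 : (⌈T⌉₊ : ℝ) < T + 1 := Nat.ceil_lt_add_one hT0
        have h3 : ((⌈T⌉₊ - 1 : ℕ) : ℝ) = (⌈T⌉₊ : ℝ) - 1 := by
          push_cast [ht1]
          ring
        linarith
      have hpq0 : (0 : ℝ) ≤ (p : ℝ) - q := by
        have : (q : ℝ) ≤ p := by exact_mod_cast hqp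
        linarith
      calc (R.card : ℝ) ≤ ((q * m + (p - q) * (⌈T⌉₊ - 1) : ℕ) : ℝ) := by exact_mod_cast hnat
        _ = q * m + ((p : ℝ) - q) * ((⌈T⌉₊ - 1 : ℕ) : ℝ) := by
            push_cast [Nat.cast_sub hqp]
            ring
        _ ≤ q * m + ((p : ℝ) - q) * T := by
            exact add_le_add (le_refl _) (mul_le_mul_of_nonneg_left ht1R hpq0)
  have hℓq : ℓ ≤ q := by
    rw [hℓ, Nat.ceil_le]
    exact arith_key p q (m : ℝ) T (R.card : ℝ) hmR hT0 hTm (by exact_mod_cast hqp) hpR hcount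
  have hℓp : ℓ ≤ p := hℓq.trans hqp
  obtain ⟨Q, hQsub, hQcard⟩ := Finset.exists_subset_card_eq hℓq
  have hQheavy : ∀ x ∈ Q,
      ⌈T⌉₊ ≤ (R.filter (fun r : Fin (m * p) => (r : ℕ) / m = (x : ℕ))).card := by
    intro x hx
    have := hQsub hx
    rw [hheavy] at this
    simpa using this
  obtain ⟨S, hSequi, hSspec⟩ := exists_S hm T R Q hQcard hQheavy
  obtain ⟨D, g, hDcard, hgC, hginj, hgdig⟩ := exists_D hp C Q hQcard
  refine ⟨S, D, hSequi, ?_, ?_⟩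
  · rcases Nat.eq_zero_or_pos (n ^ (p - ℓ)) with h0 | hpos
    · have hz : ((n : ℝ)) ^ (p - ℓ) = 0 := by
        have : ((n ^ (p - ℓ) : ℕ) : ℝ) = 0 := by rw [h0]; simp
        push_cast at this
        exact this
      rw [hz, div_zero]
      exact Nat.cast_nonneg _
    · rw [div_le_iff₀ (by exact_mod_cast hpos)]
      calc (C.card : ℝ) ≤ ((n ^ (p - ℓ) * D.card : ℕ) : ℝ) := by exact_mod_cast hDcard
        _ = (D.card : ℝ) * (n : ℝ) ^ (p - ℓ) := by push_cast; ring
  · -- the subgame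
    have hrow : ∀ i : Fin S.card, ∃ r : Fin (m * p), r ∈ R ∧
        (r : ℕ) % m = ((S.orderIsoOfFin rfl i : Fin (m * ℓ)) : ℕ) % m ∧
        ∀ h : ((S.orderIsoOfFin rfl i : Fin (m * ℓ)) : ℕ) / m < ℓ,
          (r : ℕ) / m = (((Q.orderIsoOfFin hQcard
            ⟨((S.orderIsoOfFin rfl i : Fin (m * ℓ)) : ℕ) / m, h⟩ : {x // x ∈ Q}) : Fin p) : ℕ) := by
      intro i
      obtain ⟨r, hrR, h1, h2⟩ := hSspec _ (S.orderIsoOfFin rfl i).2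
      exact ⟨r, hrR, h1, h2⟩
    choose ρ hρR hρmod hρdiv using hrow
    refine ⟨fun i => (R.orderIsoOfFin rfl).symm ⟨ρ i, hρR i⟩,
      fun j => (C.orderIsoOfFin rfl).symm ⟨g j, hgC j⟩, ?_, ?_, ?_⟩
    · intro i i' hii
      have h1 : ρ i = ρ i' := by
        have := (R.orderIsoOfFin rfl).symm.injective hii
        exact Subtype.ext_iff.mp this
      have hdlt : ((S.orderIsoOfFin rfl i : Fin (m * ℓ)) : ℕ) / m < ℓ :=
        Nat.div_lt_of_lt_mul (S.orderIsoOfFin rfl i : Fin (m * ℓ)).isLt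
      have hdlt' : ((S.orderIsoOfFin rfl i' : Fin (m * ℓ)) : ℕ) / m < ℓ :=
        Nat.div_lt_of_lt_mul (S.orderIsoOfFin rfl i' : Fin (m * ℓ)).isLt
      have hdq : (((Q.orderIsoOfFin hQcard
            ⟨((S.orderIsoOfFin rfl i : Fin (m * ℓ)) : ℕ) / m, hdlt⟩ : {x // x ∈ Q}) : Fin p) : ℕ)
          = (((Q.orderIsoOfFin hQcard
            ⟨((S.orderIsoOfFin rfl i' : Fin (m * ℓ)) : ℕ) / m, hdlt'⟩ : {x // x ∈ Q}) : Fin p) : ℕ) := by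
        rw [← hρdiv i hdlt, ← hρdiv i' hdlt', h1]
      have hdiv : ((S.orderIsoOfFin rfl i : Fin (m * ℓ)) : ℕ) / m
          = ((S.orderIsoOfFin rfl i' : Fin (m * ℓ)) : ℕ) / m := by
        have := (Q.orderIsoOfFin hQcard).injective (Subtype.ext (Fin.ext hdq))
        exact congrArg Fin.val this
      have hmod : ((S.orderIsoOfFin rfl i : Fin (m * ℓ)) : ℕ) % m
          = ((S.orderIsoOfFin rfl i' : Fin (m * ℓ)) : ℕ) % m := by
        rw [← hρmod i, ← hρmod i', h1]
      have hss : (S.orderIsoOfFin rfl i : Fin (m * ℓ)) = (S.orderIsoOfFin rfl i' : Fin (m * ℓ)) :=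
        Fin.ext (divmod_ext hdiv hmod)
      exact (S.orderIsoOfFin rfl).injective (Subtype.ext hss)
    · intro j j' hjj
      have h1 : g j = g j' := by
        have := (C.orderIsoOfFin rfl).symm.injective hjj
        exact Subtype.ext_iff.mp this
      exact hginj h1
    · intro i j
      have hr : ((R.orderIsoOfFin rfl) ((R.orderIsoOfFin rfl).symm ⟨ρ i, hρR i⟩) : Fin (m * p))
          = ρ i := by rw [OrderIso.apply_symm_apply]
      have hc : ((C.orderIsoOfFin rfl) ((C.orderIsoOfFin rfl).symm ⟨g j, hgC j⟩) : Fin (n ^ p))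
          = g j := by rw [OrderIso.apply_symm_apply]
      simp only [extract, Matrix.of_apply, interlace, hr, hc]
      have hdlt : ((S.orderIsoOfFin rfl i : Fin (m * ℓ)) : ℕ) / m < ℓ :=
        Nat.div_lt_of_lt_mul (S.orderIsoOfFin rfl i : Fin (m * ℓ)).isLt
      congr 1
      · exact Fin.ext (hρmod i).symm
      · apply Fin.ext
        show ((D.orderIsoOfFin rfl j : Fin (n ^ ℓ)) : ℕ) /
            n ^ (((S.orderIsoOfFin rfl i : Fin (m * ℓ)) : ℕ) / m) % n
          = ((g j : Fin (n ^ p)) : ℕ) / n ^ (((ρ i : Fin (m * p)) : ℕ) / m) % n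
        rw [hρdiv i hdlt]
        exact hgdig j ⟨_, hdlt⟩
end
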